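/- arXiv:2202.14026 — 12 statements merged into one kernel-verified Lean document; each statement's English description precedes it below -/
import Mathlib

section
/- Let J ∈ ℝ^{N×p} and y ∈ ℝ^N, and define h(θ, u, v) = (1/2)‖Jθ + u⊙u − v⊙v − y‖₂² for θ ∈ ℝ^p and u, v ∈ ℝ^N. Then every critical point (θ, u, v) of h (i.e., a point where the gradient of h vanishes) is either a global minimizer of h, or a strict saddle point, meaning the Hessian of h at (θ, u, v) has at least one negative eigenvalue (equivalently, there exists a direction d = (d_θ, d_u, d_v) along which the quadratic form of the Hessian is strictly negative). -/
/-!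
If the residual `r = Jθ + u ⊙ u - v ⊙ v - y` vanishes, the point is a global minimum because
`h ≥ 0`. Otherwise some `r i ≠ 0`. Moving the single coordinate `u i` (when `r i < 0`) or `v i`
(when `r i > 0`) by `t` changes only the `i`-th residual, into the quadratic
`r i ± (2 w t + t²)` with `w` the moved coordinate. So `h` restricted to that line is
`K + (r i + a t ± t²)² / 2`: criticality gives `r i · a = 0`, hence `a = 0`, and the curvature
along the line is `a² ± 2 r i = ± 2 r i < 0`.
-/

open Finset Matrix

section LineRestriction

variable {𝕜 E F : Type*} [NontriviallyNormedField 𝕜] [NormedAddCommGroup E] [NormedSpace 𝕜 E]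
  [NormedAddCommGroup F] [NormedSpace 𝕜 F]

theorem iteratedFDeriv_apply_const_eq_iteratedDeriv_line {n : ℕ} {f : E → F}
    (hf : ContDiff 𝕜 n f) (x d : E) :
    iteratedFDeriv 𝕜 n f x (fun _ => d) = iteratedDeriv n (fun t : 𝕜 => f (x + t • d)) 0 := by
  have hshift : ContDiff 𝕜 n fun z => f (x + z) := hf.comp (contDiff_const.add contDiff_id)
  have hline : (fun t : 𝕜 => f (x + t • d)) =
      (fun z => f (x + z)) ∘ ContinuousLinearMap.toSpanSingleton 𝕜 d := rfl
  rw [iteratedDeriv_eq_iteratedFDeriv, hline,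
    ContinuousLinearMap.iteratedFDeriv_comp_right _ hshift 0 le_rfl]
  simp [iteratedFDeriv_comp_add_left]

end LineRestriction

theorem hasDerivAt_quadratic (b a c t : ℝ) :
    HasDerivAt (fun t => b + a * t + c * t ^ 2) (a + 2 * c * t) t :=
  (((hasDerivAt_id' t).const_mul a).const_add b |>.add
    ((hasDerivAt_pow 2 t).const_mul c)).congr_deriv (by push_cast; ring)

theorem iteratedDeriv_const_add_half_sq_quadratic (K b a c : ℝ) :
    iteratedDeriv 1 (fun t => K + (b + a * t + c * t ^ 2) ^ 2 / 2) 0 = b * a ∧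
    iteratedDeriv 2 (fun t => K + (b + a * t + c * t ^ 2) ^ 2 / 2) 0 = a ^ 2 + 2 * b * c := by
  have hderiv : deriv (fun t => K + (b + a * t + c * t ^ 2) ^ 2 / 2) =
      fun t => (b + a * t + c * t ^ 2) * (a + 2 * c * t) := by
    ext t
    exact (((hasDerivAt_quadratic b a c t).pow 2).div_const 2 |>.const_add K).deriv.trans
      (by push_cast; ring)
  have hderiv2 : HasDerivAt (fun t => (b + a * t + c * t ^ 2) * (a + 2 * c * t))
      (a ^ 2 + 2 * b * c) 0 :=
    ((hasDerivAt_quadratic b a c 0).mul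
      (((hasDerivAt_id' 0).const_mul (2 * c)).const_add a)).congr_deriv (by ring)
  rw [iteratedDeriv_one, iteratedDeriv_succ, iteratedDeriv_one, hderiv, hderiv2.deriv]
  simp

theorem iteratedFDeriv_two_apply_neg_of_line {E : Type*} [NormedAddCommGroup E] [NormedSpace ℝ E]
    {f : E → ℝ} {x d : E} (hf : ContDiff ℝ 2 f) (hx : fderiv ℝ f x = 0) {K b a c : ℝ}
    (hline : ∀ t : ℝ, f (x + t • d) = K + (b + a * t + c * t ^ 2) ^ 2 / 2) (hbc : b * c < 0) :
    iteratedFDeriv ℝ 2 f x ![d, d] < 0 := by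
  have hline' : (fun t : ℝ => f (x + t • d)) = _ := funext hline
  obtain ⟨hfirst, hsecond⟩ := iteratedDeriv_const_add_half_sq_quadratic K b a c
  have hba : b * a = 0 := by
    rw [← hfirst, ← hline', ← iteratedFDeriv_apply_const_eq_iteratedDeriv_line
      (hf.of_le one_le_two), iteratedFDeriv_one_apply, hx]
    rfl
  have ha : a = 0 := (mul_eq_zero.mp hba).resolve_left (by rintro rfl; simp at hbc)
  have hdd : ![d, d] = fun _ => d := by ext i; fin_cases i <;> rfl
  rw [hdd, iteratedFDeriv_apply_const_eq_iteratedDeriv_line hf, hline', hsecond, ha]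
  linarith

theorem sum_sq_add_single {ι : Type*} [Fintype ι] [DecidableEq ι] (r : ι → ℝ) (i : ι) (s : ℝ) :
    ∑ j, (r + Pi.single i s : ι → ℝ) j ^ 2 = ∑ j, r j ^ 2 - r i ^ 2 + (r i + s) ^ 2 := by
  rw [← add_sum_erase _ _ (mem_univ i), ← add_sum_erase _ _ (mem_univ i)]
  have hoff : ∀ j ∈ univ.erase i, (r + Pi.single i s : ι → ℝ) j ^ 2 = r j ^ 2 := fun j hj => by
    simp [ne_of_mem_erase hj]
  rw [sum_congr rfl hoff]
  simp only [Pi.add_apply, Pi.single_eq_same]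
  ring

section HadamardLoss

variable {ι κ : Type*} [Fintype κ]

def hadamardResidual (J : Matrix ι κ ℝ) (y : ι → ℝ) (z : (κ → ℝ) × (ι → ℝ) × (ι → ℝ)) : ι → ℝ :=
  J *ᵥ z.1 + z.2.1 * z.2.1 - z.2.2 * z.2.2 - y

noncomputable def hadamardLoss [Fintype ι] (J : Matrix ι κ ℝ) (y : ι → ℝ)
    (z : (κ → ℝ) × (ι → ℝ) × (ι → ℝ)) : ℝ :=
  (1 / 2) * ∑ i, hadamardResidual J y z i ^ 2

section Loss

variable [Fintype ι] (J : Matrix ι κ ℝ) (y : ι → ℝ)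

theorem contDiff_hadamardLoss {n : WithTop ℕ∞} : ContDiff ℝ n (hadamardLoss J y) := by
  have hmulVec : ContDiff ℝ n fun θ : κ → ℝ => J *ᵥ θ :=
    (LinearMap.toContinuousLinearMap (mulVecLin J)).contDiff
  unfold hadamardLoss hadamardResidual
  fun_prop

theorem hadamardLoss_nonneg (z : (κ → ℝ) × (ι → ℝ) × (ι → ℝ)) : 0 ≤ hadamardLoss J y z := by
  unfold hadamardLoss; positivity

theorem hadamardLoss_eq_zero_of_hadamardResidual_eq_zero {z : (κ → ℝ) × (ι → ℝ) × (ι → ℝ)}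
    (hz : hadamardResidual J y z = 0) :
    hadamardLoss J y z = 0 := by
  simp [hadamardLoss, hz]

end Loss

variable [DecidableEq ι] (J : Matrix ι κ ℝ) (y : ι → ℝ) (θ : κ → ℝ) (u v : ι → ℝ) (i : ι) (t : ℝ)

theorem hadamardResidual_add_smul_single_u :
    hadamardResidual J y ((θ, u, v) + t • (0, Pi.single i 1, 0)) =
      hadamardResidual J y (θ, u, v) + (Pi.single i (2 * u i * t + t ^ 2) : ι → ℝ) := by
  ext j
  by_cases hj : j = i
  · subst hj
    simp only [hadamardResidual, Prod.smul_mk, smul_zero, Prod.mk_add_mk, add_zero, Pi.sub_apply,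
      Pi.add_apply, Pi.mul_apply, Pi.smul_apply, Pi.single_eq_same, smul_eq_mul, mul_one]
    ring
  · simp [hadamardResidual, hj]

theorem hadamardResidual_add_smul_single_v :
    hadamardResidual J y ((θ, u, v) + t • (0, 0, Pi.single i 1)) =
      hadamardResidual J y (θ, u, v) + (Pi.single i (-2 * v i * t - t ^ 2) : ι → ℝ) := by
  ext j
  by_cases hj : j = i
  · subst hj
    simp only [hadamardResidual, Prod.smul_mk, smul_zero, Prod.mk_add_mk, add_zero, Pi.sub_apply,
      Pi.add_apply, Pi.mul_apply, Pi.smul_apply, Pi.single_eq_same, smul_eq_mul, mul_one]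
    ring
  · simp [hadamardResidual, hj]

variable [Fintype ι]

theorem hadamardLoss_add_smul_single_u :
    hadamardLoss J y ((θ, u, v) + t • (0, Pi.single i 1, 0)) =
      (1 / 2) * (∑ j, hadamardResidual J y (θ, u, v) j ^ 2 - hadamardResidual J y (θ, u, v) i ^ 2
        + (hadamardResidual J y (θ, u, v) i + 2 * u i * t + t ^ 2) ^ 2) := by
  rw [hadamardLoss, hadamardResidual_add_smul_single_u, sum_sq_add_single, add_assoc]

theorem hadamardLoss_add_smul_single_v :
    hadamardLoss J y ((θ, u, v) + t • (0, 0, Pi.single i 1)) =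
      (1 / 2) * (∑ j, hadamardResidual J y (θ, u, v) j ^ 2 - hadamardResidual J y (θ, u, v) i ^ 2
        + (hadamardResidual J y (θ, u, v) i - 2 * v i * t - t ^ 2) ^ 2) := by
  rw [hadamardLoss, hadamardResidual_add_smul_single_v, sum_sq_add_single]
  ring

end HadamardLoss

/-- Every critical point of
`h(θ,u,v) = (1/2)‖Jθ + u⊙u − v⊙v − y‖₂²` is either a global minimizer or a
strict saddle (the Hessian has a direction of strictly negative curvature). -/
theorem stmt_0 (N p : ℕ) (J : Matrix (Fin N) (Fin p) ℝ) (y : Fin N → ℝ)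
    (h : ((Fin p → ℝ) × (Fin N → ℝ) × (Fin N → ℝ)) → ℝ)
    (hdef : ∀ (θ : Fin p → ℝ) (u v : Fin N → ℝ), h (θ, u, v) =
      (1 / 2) * ∑ i, (J.mulVec θ i + u i * u i - v i * v i - y i) ^ 2)
    (θ : Fin p → ℝ) (u v : Fin N → ℝ)
    (hcrit : fderiv ℝ h (θ, u, v) = 0) :
    (∀ x, h (θ, u, v) ≤ h x) ∨
    (∃ d : (Fin p → ℝ) × (Fin N → ℝ) × (Fin N → ℝ),
      (iteratedFDeriv ℝ 2 h (θ, u, v)) ![d, d] < 0) := by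
  obtain rfl : h = hadamardLoss J y :=
    funext fun ⟨θ, u, v⟩ => by simp [hdef, hadamardLoss, hadamardResidual]
  by_cases hres : hadamardResidual J y (θ, u, v) = 0
  · left
    intro z
    rw [hadamardLoss_eq_zero_of_hadamardResidual_eq_zero J y hres]
    exact hadamardLoss_nonneg J y z
  right
  obtain ⟨i, hi⟩ := Function.ne_iff.mp hres
  set r := hadamardResidual J y (θ, u, v)
  have hsmooth := contDiff_hadamardLoss (n := 2) J y
  rcases hi.lt_or_gt with hneg | hpos
  · refine ⟨(0, Pi.single i 1, 0), iteratedFDeriv_two_apply_neg_of_line hsmooth hcrit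
      (K := (∑ j, r j ^ 2 - r i ^ 2) / 2) (a := 2 * u i) (c := 1) (fun t => ?_)
      (by simpa using hneg)⟩
    rw [hadamardLoss_add_smul_single_u]
    ring
  · refine ⟨(0, 0, Pi.single i 1), iteratedFDeriv_two_apply_neg_of_line hsmooth hcrit
      (K := (∑ j, r j ^ 2 - r i ^ 2) / 2) (a := -2 * v i) (c := -1) (fun t => ?_)
      (by simpa using hpos)⟩
    rw [hadamardLoss_add_smul_single_v]
    ring
end

section
/- Let J ∈ ℝ^{N×p} and y ∈ ℝ^N, and define h(θ, u, v) = (1/2)‖Jθ + u⊙u − v⊙v − y‖₂². If (θ, u, v) is a critical point of h that is not a global minimizer, i.e., its residual r := Jθ + u⊙u − v⊙v − y is nonzero, then there exists an index i ∈ {1, …, N} such that the i-th entries satisfy uⁱ = vⁱ = 0 and rⁱ ≠ 0. -/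
/-!
The partial derivatives of `h` in `uᵢ` and `vᵢ` are `2 rᵢ uᵢ` and `-2 rᵢ vᵢ`. At a critical point
both vanish, so any index with `rᵢ ≠ 0` (one exists because `r ≠ 0`) has `uᵢ = vᵢ = 0`.
-/

open Matrix

lemma hasLineDerivAt_half_sum_sq {ι E : Type*} [Fintype ι] [NormedAddCommGroup E]
    [NormedSpace ℝ E] {f : E → ι → ℝ} {f' : ι → ℝ} {x d : E}
    (hf : ∀ i, HasLineDerivAt ℝ (fun z => f z i) (f' i) x d) :
    HasLineDerivAt ℝ (fun z => 1 / 2 * ∑ i, f z i ^ 2) (∑ i, f x i * f' i) x d := by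
  refine ((HasDerivAt.fun_sum fun i _ => (hf i).pow 2).const_mul (1 / 2 : ℝ)).congr_deriv ?_
  rw [Finset.mul_sum]
  refine Finset.sum_congr rfl fun i _ => ?_
  simp only [zero_smul, add_zero]
  ring

lemma hasLineDerivAt_residual {N p : ℕ} (J : Matrix (Fin N) (Fin p) ℝ) (y : Fin N → ℝ)
    (x d : (Fin p → ℝ) × (Fin N → ℝ) × (Fin N → ℝ)) (j : Fin N) :
    HasLineDerivAt ℝ
      (fun z : (Fin p → ℝ) × (Fin N → ℝ) × (Fin N → ℝ) =>
        (J *ᵥ z.1) j + z.2.1 j * z.2.1 j - z.2.2 j * z.2.2 j - y j)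
      ((J *ᵥ d.1) j + 2 * x.2.1 j * d.2.1 j - 2 * x.2.2 j * d.2.2 j) x d := by
  have hline (a b : ℝ) : HasDerivAt (fun t : ℝ => a + t * b) b 0 := by
    simpa using ((hasDerivAt_id (0 : ℝ)).mul_const b).const_add a
  unfold HasLineDerivAt
  simp only [Prod.fst_add, Prod.snd_add, Prod.smul_fst, Prod.smul_snd, mulVec_add, mulVec_smul,
    Pi.add_apply, Pi.smul_apply, smul_eq_mul]
  have hθ := hline ((J *ᵥ x.1) j) ((J *ᵥ d.1) j)
  have hu := hline (x.2.1 j) (d.2.1 j)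
  have hv := hline (x.2.2 j) (d.2.2 j)
  exact (((hθ.add (hu.mul hu)).sub (hv.mul hv)).sub_const (y j)).congr_deriv (by ring)

lemma HasLineDerivAt.eq_zero_of_fderiv_eq_zero {E F : Type*} [NormedAddCommGroup E]
    [NormedSpace ℝ E] [NormedAddCommGroup F] [NormedSpace ℝ F] {f : E → F} {f' : F} {x d : E}
    (hf : DifferentiableAt ℝ f x) (hcrit : fderiv ℝ f x = 0) (h : HasLineDerivAt ℝ f f' x d) :
    f' = 0 :=
  h.unique (by simpa [hcrit] using hf.hasFDerivAt.hasLineDerivAt d)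

/-- If `(θ,u,v)` is a critical point of
`h(θ,u,v) = (1/2)‖Jθ + u⊙u − v⊙v − y‖₂²` whose residual
`r = Jθ + u⊙u − v⊙v − y` is nonzero, then there is an index `i` with
`u i = v i = 0` and `r i ≠ 0`. -/
theorem stmt_1 (N p : ℕ) (J : Matrix (Fin N) (Fin p) ℝ) (y : Fin N → ℝ)
    (h : ((Fin p → ℝ) × (Fin N → ℝ) × (Fin N → ℝ)) → ℝ)
    (hdef : ∀ (θ : Fin p → ℝ) (u v : Fin N → ℝ), h (θ, u, v) =
      (1 / 2) * ∑ i, (J.mulVec θ i + u i * u i - v i * v i - y i) ^ 2)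
    (θ : Fin p → ℝ) (u v : Fin N → ℝ) (r : Fin N → ℝ)
    (hr : r = fun i => J.mulVec θ i + u i * u i - v i * v i - y i)
    (hcrit : fderiv ℝ h (θ, u, v) = 0)
    (hnotglobal : r ≠ 0) :
    ∃ i : Fin N, u i = 0 ∧ v i = 0 ∧ r i ≠ 0 := by
  obtain ⟨i, hri⟩ : ∃ i, r i ≠ 0 := Function.ne_iff.mp hnotglobal
  have hh : h = fun x => 1 / 2 * ∑ j, ((J *ᵥ x.1) j + x.2.1 j * x.2.1 j
      - x.2.2 j * x.2.2 j - y j) ^ 2 :=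
    funext fun x => hdef x.1 x.2.1 x.2.2
  have hdiff : DifferentiableAt ℝ h (θ, u, v) := by
    rw [hh]
    simp only [mulVec, dotProduct]
    fun_prop
  have hgrad (d : (Fin p → ℝ) × (Fin N → ℝ) × (Fin N → ℝ)) :
      ∑ j, r j * ((J *ᵥ d.1) j + 2 * u j * d.2.1 j - 2 * v j * d.2.2 j) = 0 := by
    refine HasLineDerivAt.eq_zero_of_fderiv_eq_zero (d := d) hdiff hcrit ?_
    have hline := hasLineDerivAt_half_sum_sq fun j => hasLineDerivAt_residual J y (θ, u, v) d j
    rw [hh, hr]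
    exact hline
  have hu := hgrad (0, Pi.single i 1, 0)
  have hv := hgrad (0, 0, Pi.single i 1)
  exact ⟨i, by simpa [Pi.single_apply, hri] using hu,
    by simpa [Pi.single_apply, hri] using hv, hri⟩
end

section
/- Suppose a matrix A ∈ ℝ^{m×n} satisfies the null space property with constant ρ ∈ (0,1) relative to a set S ⊆ {1,…,n}. Then for every vector x ∈ ℝ^n supported on S (i.e., xⁱ = 0 for all i ∉ S) and every z ∈ ℝ^n with Az = Ax, one has ‖z − x‖₁ ≤ ((1 + ρ)/(1 − ρ))·(‖z‖₁ − ‖x‖₁). -/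
/-- If `A` satisfies the null space property with constant
`ρ ∈ (0,1)` relative to `S`, then for every `x` supported on `S` and every `z`
with `Az = Ax`, we have `‖z − x‖₁ ≤ ((1+ρ)/(1−ρ))·(‖z‖₁ − ‖x‖₁)`. -/
theorem stmt_4 (m n : ℕ) (A : Matrix (Fin m) (Fin n) ℝ)
    (ρ : ℝ) (hρ : ρ ∈ Set.Ioo (0 : ℝ) 1)
    (S : Finset (Fin n))
    (hNSP : ∀ v : Fin n → ℝ, A.mulVec v = 0 →
      ∑ i ∈ S, |v i| ≤ ρ * ∑ i ∈ Sᶜ, |v i|)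
    (x z : Fin n → ℝ)
    (hx : ∀ i ∉ S, x i = 0)
    (hz : A.mulVec z = A.mulVec x) :
    ∑ i, |z i - x i| ≤ ((1 + ρ) / (1 - ρ)) * (∑ i, |z i| - ∑ i, |x i|) := by
  obtain ⟨hρ0, hρ1⟩ := hρ
  set v : Fin n → ℝ := fun i => z i - x i with hv
  have hAv : A.mulVec v = 0 := by
    have hveq : v = z - x := rfl
    rw [hveq, Matrix.mulVec_sub, hz, sub_self]
  have hkey := hNSP v hAv
  set a := ∑ i ∈ S, |v i| with ha
  set b := ∑ i ∈ Sᶜ, |v i| with hb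
  have hsplit : ∑ i, |v i| = a + b := (Finset.sum_add_sum_compl S _).symm
  have hzx : ∑ i, |z i| - ∑ i, |x i| ≥ b - a := by
    have h1 : ∑ i, |z i| = ∑ i ∈ S, |z i| + ∑ i ∈ Sᶜ, |z i| :=
      (Finset.sum_add_sum_compl S _).symm
    have h2 : ∑ i, |x i| = ∑ i ∈ S, |x i| := by
      rw [← Finset.sum_add_sum_compl S]
      have : ∑ i ∈ Sᶜ, |x i| = 0 := by
        apply Finset.sum_eq_zero
        intro i hi
        rw [hx i (Finset.mem_compl.mp hi), abs_zero]
      linarith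
    have h3 : ∑ i ∈ Sᶜ, |z i| = b := by
      apply Finset.sum_congr rfl
      intro i hi
      rw [hv]
      simp [hx i (Finset.mem_compl.mp hi)]
    have h4 : ∑ i ∈ S, |x i| - ∑ i ∈ S, |z i| ≤ a := by
      rw [ha, ← Finset.sum_sub_distrib]
      apply Finset.sum_le_sum
      intro i _
      have := abs_sub_abs_le_abs_sub (x i) (z i)
      have h5 : |x i - z i| = |v i| := by rw [hv, abs_sub_comm]
      linarith
    linarith
  have hb0 : 0 ≤ b := Finset.sum_nonneg fun i _ => abs_nonneg _
  have h1ρ : 0 < 1 - ρ := by linarith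
  rw [hsplit, div_mul_eq_mul_div, le_div_iff₀ h1ρ]
  nlinarith [mul_le_mul_of_nonneg_left hzx.le (by linarith : (0:ℝ) ≤ 1 + ρ)]
end

section
/- Let J ∈ ℝ^{N×p} with compact SVD J = UΣVᵀ (U ∈ ℝ^{N×r} with orthonormal columns, Σ ∈ ℝ^{r×r} diagonal positive definite, V ∈ ℝ^{p×r} with orthonormal columns), let s⋆ ∈ ℝ^N, set θ⋆ = VΣ⁻¹Uᵀ(y − s⋆) where y = Jθ⋆ + s⋆, and let A ∈ ℝ^{m×N} be a matrix with AJ = 0 whose null space equals the column space of U. If A satisfies the null space property with constant ρ ∈ (0,1) relative to the support of s⋆, then for every λ > λ₀ := 2·((1 + ρ)/(1 − ρ))·‖UΣ⁻¹Vᵀθ⋆‖_∞, the pair (θ⋆, s⋆) is the unique optimal solution to the convex program: minimize (1/2)‖θ‖₂² + λ‖s‖₁ over (θ, s) subject to y = Jθ + s. -/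
open Matrix

set_option maxHeartbeats 1000000

lemma dp_mulVec_left {a b : ℕ} (A : Matrix (Fin a) (Fin b) ℝ) (x : Fin b → ℝ) (w : Fin a → ℝ) :
    (A.mulVec x) ⬝ᵥ w = x ⬝ᵥ (Aᵀ.mulVec w) := by
  simp [Matrix.mulVec_transpose, Matrix.dotProduct_mulVec, dotProduct_comm]

/-- Under the compact SVD `J = UΣVᵀ`, with `θ⋆ = VΣ⁻¹Uᵀ(y − s⋆)`,
`y = Jθ⋆ + s⋆`, and `A` annihilating `J` with null space equal to the column
space of `U` and satisfying the null space property with constant `ρ ∈ (0,1)`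
relative to the support of `s⋆`, for every
`λ > λ₀ = 2((1+ρ)/(1−ρ))‖UΣ⁻¹Vᵀθ⋆‖_∞` the pair `(θ⋆, s⋆)` is the unique
optimal solution of `min (1/2)‖θ‖₂² + λ‖s‖₁ s.t. y = Jθ + s`. -/
theorem stmt_6 (N p r m : ℕ)
    (U : Matrix (Fin N) (Fin r) ℝ) (V : Matrix (Fin p) (Fin r) ℝ) (σ : Fin r → ℝ)
    (hU : Uᵀ * U = 1) (hV : Vᵀ * V = 1) (hσ : ∀ i, 0 < σ i)
    (J : Matrix (Fin N) (Fin p) ℝ) (hJ : J = U * Matrix.diagonal σ * Vᵀ)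
    (y sstar : Fin N → ℝ) (θstar : Fin p → ℝ)
    (hθ : θstar = (V * Matrix.diagonal (fun i => (σ i)⁻¹) * Uᵀ).mulVec (y - sstar))
    (hy : y = J.mulVec θstar + sstar)
    (A : Matrix (Fin m) (Fin N) ℝ) (hAJ : A * J = 0)
    (hker : ∀ w : Fin N → ℝ, A.mulVec w = 0 ↔ ∃ a : Fin r → ℝ, w = U.mulVec a)
    (ρ : ℝ) (hρ : ρ ∈ Set.Ioo (0 : ℝ) 1)
    (hNSP : ∀ v : Fin N → ℝ, A.mulVec v = 0 →
      ∑ i ∈ Finset.univ.filter (fun i => sstar i ≠ 0), |v i| ≤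
        ρ * ∑ i ∈ (Finset.univ.filter (fun i => sstar i ≠ 0))ᶜ, |v i|)
    (lam : ℝ)
    (hlam : lam > 2 * ((1 + ρ) / (1 - ρ)) *
      (⨆ i : Fin N,
        |(U * Matrix.diagonal (fun i => (σ i)⁻¹) * Vᵀ).mulVec θstar i|)) :
    (∀ (θ : Fin p → ℝ) (s : Fin N → ℝ), y = J.mulVec θ + s →
      (1 / 2) * ∑ j, (θstar j) ^ 2 + lam * ∑ i, |sstar i| ≤
      (1 / 2) * ∑ j, (θ j) ^ 2 + lam * ∑ i, |s i|) ∧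
    (∀ (θ : Fin p → ℝ) (s : Fin N → ℝ), y = J.mulVec θ + s →
      (θ, s) ≠ (θstar, sstar) →
      (1 / 2) * ∑ j, (θstar j) ^ 2 + lam * ∑ i, |sstar i| <
      (1 / 2) * ∑ j, (θ j) ^ 2 + lam * ∑ i, |s i|) := by
  obtain ⟨hρ0, hρ1⟩ := hρ
  have h1ρ : (0:ℝ) < 1 - ρ := by linarith
  set z : Fin N → ℝ := (U * Matrix.diagonal (fun i => (σ i)⁻¹) * Vᵀ).mulVec θstar with hzdef
  set M : ℝ := ⨆ i : Fin N, |z i| with hMdef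
  set S : Finset (Fin N) := Finset.univ.filter (fun i => sstar i ≠ 0) with hSdef
  have hM0 : 0 ≤ M := Real.iSup_nonneg (fun i => abs_nonneg _)
  have hMle : ∀ i, |z i| ≤ M := fun i => by
    rw [hMdef]
    exact le_ciSup (f := fun i => |z i|) (Set.Finite.bddAbove (Set.finite_range _)) i
  have hlam0 : 0 < lam := by
    have h1 : 0 ≤ 2 * ((1 + ρ) / (1 - ρ)) * M := by positivity
    linarith
  have hlam' : 2 * (1 + ρ) * M < lam * (1 - ρ) := by
    have h := mul_lt_mul_of_pos_right hlam h1ρ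
    have he : 2 * ((1 + ρ) / (1 - ρ)) * M * (1 - ρ) = 2 * (1 + ρ) * M := by
      field_simp
    linarith [he ▸ h]
  -- θstar is a fixed point of V Vᵀ
  have hVVB : V * Vᵀ * (V * Matrix.diagonal (fun i => (σ i)⁻¹) * Uᵀ)
      = V * Matrix.diagonal (fun i => (σ i)⁻¹) * Uᵀ := by
    simp only [Matrix.mul_assoc]
    rw [← Matrix.mul_assoc Vᵀ V, hV, Matrix.one_mul]
  have hfix : (V * Vᵀ).mulVec θstar = θstar := by
    conv_lhs => rw [hθ]
    rw [Matrix.mulVec_mulVec, hVVB, ← hθ]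
  have hdinv : Matrix.diagonal (fun i => (σ i)⁻¹) * Matrix.diagonal σ
      = (1 : Matrix (Fin r) (Fin r) ℝ) := by
    have hfun : (fun i => (σ i)⁻¹ * σ i) = fun _ => (1:ℝ) :=
      funext fun i => inv_mul_cancel₀ (hσ i).ne'
    rw [Matrix.diagonal_mul_diagonal, hfun, Matrix.diagonal_one]
  have hBtC : (U * Matrix.diagonal (fun i => (σ i)⁻¹) * Vᵀ)ᵀ * J = V * Vᵀ := by
    rw [hJ]
    simp only [Matrix.transpose_mul, Matrix.transpose_transpose,
      Matrix.diagonal_transpose, Matrix.mul_assoc]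
    rw [← Matrix.mul_assoc Uᵀ U, hU, Matrix.one_mul,
      ← Matrix.mul_assoc (Matrix.diagonal (fun i => (σ i)⁻¹)) (Matrix.diagonal σ), hdinv,
      Matrix.one_mul]
  -- the key inequality
  have key : ∀ (θ : Fin p → ℝ) (s : Fin N → ℝ), y = J.mulVec θ + s →
      (1 / 2) * ∑ j, (θstar j) ^ 2 + lam * ∑ i, |sstar i|
        + (1 / 2) * ∑ j, (θ j - θstar j) ^ 2
      ≤ (1 / 2) * ∑ j, (θ j) ^ 2 + lam * ∑ i, |s i| := by
    intro θ s hfeas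
    set δ : Fin p → ℝ := θ - θstar with hδdef
    set v : Fin N → ℝ := sstar - s with hvdef
    have hv : v = J.mulVec δ := by
      have h0 : J.mulVec θstar + sstar = J.mulVec θ + s := by rw [← hy, ← hfeas]
      have h2 := Matrix.mulVec_sub J θ θstar
      funext i
      have h0' := congrFun h0 i
      have h2' := congrFun h2 i
      simp only [Pi.add_apply, Pi.sub_apply] at h0' h2'
      simp only [hvdef, hδdef, Pi.sub_apply]
      rw [h2']
      linarith
    have hAv : A.mulVec v = 0 := by
      rw [hv, Matrix.mulVec_mulVec, hAJ]
      simp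
    have hNSPv := hNSP v hAv
    -- inner product identity
    have hip : z ⬝ᵥ v = θstar ⬝ᵥ δ := by
      rw [hzdef, hv, dp_mulVec_left, Matrix.mulVec_mulVec, hBtC,
        Matrix.dotProduct_mulVec, ← Matrix.mulVec_transpose, Matrix.transpose_mul,
        Matrix.transpose_transpose, hfix]
    set a : ℝ := ∑ i ∈ S, |v i| with hadef
    set b : ℝ := ∑ i ∈ Sᶜ, |v i| with hbdef
    have hab : a + b = ∑ i, |v i| := Finset.sum_add_sum_compl S _
    have ha0 : 0 ≤ a := Finset.sum_nonneg (fun i _ => abs_nonneg _)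
    have hb0 : 0 ≤ b := Finset.sum_nonneg (fun i _ => abs_nonneg _)
    -- dot product lower bound
    have habs : |z ⬝ᵥ v| ≤ M * (a + b) := by
      rw [hab]
      calc |z ⬝ᵥ v| = |∑ i, z i * v i| := rfl
        _ ≤ ∑ i, |z i * v i| := Finset.abs_sum_le_sum_abs _ _
        _ ≤ ∑ i, M * |v i| := Finset.sum_le_sum (fun i _ => by
            rw [abs_mul]; exact mul_le_mul_of_nonneg_right (hMle i) (abs_nonneg _))
        _ = M * ∑ i, |v i| := (Finset.mul_sum _ _ _).symm
    have hz_lb : -(M * (a + b)) ≤ z ⬝ᵥ v := (abs_le.mp habs).1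
    -- ℓ¹ bounds
    have hs_eq : ∀ i, s i = sstar i - v i := by
      intro i; simp [hvdef]
    have hsc : ∑ i ∈ Sᶜ, |s i| = b := by
      apply Finset.sum_congr rfl
      intro i hi
      have : sstar i = 0 := by
        simp only [hSdef, Finset.mem_compl, Finset.mem_filter, Finset.mem_univ,
          true_and, not_not] at hi
        exact hi
      rw [hs_eq i, this]
      simp
    have hsS : ∑ i ∈ S, |sstar i| - a ≤ ∑ i ∈ S, |s i| := by
      rw [← Finset.sum_sub_distrib]
      apply Finset.sum_le_sum
      intro i _
      rw [hs_eq i]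
      exact abs_sub_abs_le_abs_sub _ _
    have hstar_eq : ∑ i, |sstar i| = ∑ i ∈ S, |sstar i| := by
      rw [← Finset.sum_add_sum_compl S (fun i => |sstar i|)]
      have : ∑ i ∈ Sᶜ, |sstar i| = 0 := by
        apply Finset.sum_eq_zero
        intro i hi
        simp only [hSdef, Finset.mem_compl, Finset.mem_filter, Finset.mem_univ,
          true_and, not_not] at hi
        rw [hi]; simp
      rw [this, add_zero]
    have hsum_s : ∑ i, |sstar i| - a + b ≤ ∑ i, |s i| := by
      rw [← Finset.sum_add_sum_compl S (fun i => |s i|), hsc, hstar_eq]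
      linarith
    -- square expansion
    have hsq : ∑ j, (θ j) ^ 2
        = ∑ j, (θstar j) ^ 2 + 2 * (θstar ⬝ᵥ δ) + ∑ j, (θ j - θstar j) ^ 2 := by
      simp only [dotProduct, hδdef, Pi.sub_apply, Finset.mul_sum]
      rw [← Finset.sum_add_distrib, ← Finset.sum_add_distrib]
      exact Finset.sum_congr rfl (fun j _ => by ring)
    -- core scalar inequality
    have hcore : M * (a + b) ≤ lam * (b - a) := by
      nlinarith [mul_le_mul_of_nonneg_left hNSPv hlam0.le,
        mul_le_mul_of_nonneg_left hNSPv hM0,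
        mul_le_mul_of_nonneg_right hlam'.le hb0,
        mul_nonneg hM0 hb0, mul_nonneg (mul_nonneg hM0 hρ0.le) hb0]
    have h1 : lam * (∑ i, |sstar i| - a + b) ≤ lam * ∑ i, |s i| :=
      mul_le_mul_of_nonneg_left hsum_s hlam0.le
    have h2 : -(M * (a + b)) ≤ θstar ⬝ᵥ δ := hip ▸ hz_lb
    have h3 : lam * (∑ i, |sstar i| - a + b) = lam * ∑ i, |sstar i| - lam * a + lam * b := by
      ring
    rw [h3] at h1
    rw [hsq]
    linarith [h1, h2, hcore]
  constructor
  · intro θ s hfeas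
    have h := key θ s hfeas
    have hnn : 0 ≤ (1 / 2) * ∑ j, (θ j - θstar j) ^ 2 := by positivity
    linarith
  · intro θ s hfeas hne
    by_cases hθe : θ = θstar
    · exfalso
      apply hne
      subst hθe
      have hs : s = sstar := by
        funext i
        have := congrFun (hy.symm.trans hfeas) i
        simp only [Pi.add_apply] at this
        linarith
      rw [hs]
    · have hj : ∃ j, θ j ≠ θstar j := by
        by_contra h
        push_neg at h
        exact hθe (funext h)
      obtain ⟨j0, hj0⟩ := hj
      have hne0 : θ j0 - θstar j0 ≠ 0 := sub_ne_zero.mpr hj0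
      have hpos : 0 < ∑ j, (θ j - θstar j) ^ 2 :=
        Finset.sum_pos' (fun j _ => sq_nonneg _)
          ⟨j0, Finset.mem_univ _,
            lt_of_le_of_ne (sq_nonneg _) (Ne.symm (pow_ne_zero 2 hne0))⟩
      have h := key θ s hfeas
      linarith
end

section
/- Let J ∈ ℝ^{N×p} with compact SVD J = UΣVᵀ, let s⋆ ∈ ℝ^N with support S, y = Jθ⋆ + s⋆ where θ⋆ = VΣ⁻¹Uᵀ(y − s⋆), and let A be a matrix with AJ = 0 whose null space equals the column space of U and which satisfies the null space property with constant ρ ∈ (0,1) relative to S. Define g(s) = (1/2)‖VΣ⁻¹Uᵀ(y − s)‖₂² + λ‖s‖₁. Then for every s ∈ ℝ^N with A s = A s⋆, one has g(s) − g(s⋆) ≥ (λ·(1 − ρ)/(1 + ρ) − 2‖UΣ⁻¹Vᵀθ⋆‖_∞)·‖s − s⋆‖₁. -/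
open Matrix

/-- With the compact SVD `J = UΣVᵀ`, `θ⋆ = VΣ⁻¹Uᵀ(y − s⋆)`,
`y = Jθ⋆ + s⋆`, `A` annihilating `J` with null space equal to the column space
of `U` and satisfying the null space property with constant `ρ ∈ (0,1)`
relative to the support of `s⋆`, and
`g(s) = (1/2)‖VΣ⁻¹Uᵀ(y − s)‖₂² + λ‖s‖₁`, for every `s` with `As = As⋆`,
`g(s) − g(s⋆) ≥ (λ(1−ρ)/(1+ρ) − 2‖UΣ⁻¹Vᵀθ⋆‖_∞)·‖s − s⋆‖₁`. -/
theorem stmt_7 (N p r m : ℕ)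
    (U : Matrix (Fin N) (Fin r) ℝ) (V : Matrix (Fin p) (Fin r) ℝ) (σ : Fin r → ℝ)
    (hU : Uᵀ * U = 1) (hV : Vᵀ * V = 1) (hσ : ∀ i, 0 < σ i)
    (J : Matrix (Fin N) (Fin p) ℝ) (hJ : J = U * Matrix.diagonal σ * Vᵀ)
    (y sstar : Fin N → ℝ) (θstar : Fin p → ℝ)
    (hθ : θstar = (V * Matrix.diagonal (fun i => (σ i)⁻¹) * Uᵀ).mulVec (y - sstar))
    (hy : y = J.mulVec θstar + sstar)
    (A : Matrix (Fin m) (Fin N) ℝ) (hAJ : A * J = 0)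
    (hker : ∀ w : Fin N → ℝ, A.mulVec w = 0 ↔ ∃ a : Fin r → ℝ, w = U.mulVec a)
    (ρ : ℝ) (hρ : ρ ∈ Set.Ioo (0 : ℝ) 1)
    (hNSP : ∀ v : Fin N → ℝ, A.mulVec v = 0 →
      ∑ i ∈ Finset.univ.filter (fun i => sstar i ≠ 0), |v i| ≤
        ρ * ∑ i ∈ (Finset.univ.filter (fun i => sstar i ≠ 0))ᶜ, |v i|)
    (lam : ℝ) (hlam : 0 < lam)
    (g : (Fin N → ℝ) → ℝ)
    (hg : ∀ s : Fin N → ℝ, g s =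
      (1 / 2) * ∑ j, ((V * Matrix.diagonal (fun i => (σ i)⁻¹) * Uᵀ).mulVec (y - s) j) ^ 2
        + lam * ∑ i, |s i|) :
    ∀ s : Fin N → ℝ, A.mulVec s = A.mulVec sstar →
      g s - g sstar ≥
        (lam * (1 - ρ) / (1 + ρ) -
          2 * ⨆ i : Fin N,
            |(U * Matrix.diagonal (fun i => (σ i)⁻¹) * Vᵀ).mulVec θstar i|) *
        ∑ i, |s i - sstar i| := by
  obtain ⟨hρ0, hρ1⟩ := hρ
  intro s hs
  set B := V * Matrix.diagonal (fun i => (σ i)⁻¹) * Uᵀ with hBdef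
  set Bt := U * Matrix.diagonal (fun i => (σ i)⁻¹) * Vᵀ with hBtdef
  have hBtB : Bᵀ = Bt := by
    rw [hBdef, hBtdef]
    simp [Matrix.transpose_mul, Matrix.mul_assoc]
  set M := ⨆ i : Fin N, |Bt.mulVec θstar i| with hMdef
  set L1 := ∑ i, |s i - sstar i| with hL1def
  have hL1nn : 0 ≤ L1 := Finset.sum_nonneg fun i _ => abs_nonneg _
  -- the difference vector
  have hvv : (fun i => s i - sstar i) = s - sstar := by funext i; rfl
  have hAv : A.mulVec (fun i => s i - sstar i) = 0 := by
    rw [hvv, Matrix.mulVec_sub, hs, sub_self]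
  -- M is nonnegative and bounds entries
  have hMbd : ∀ i, |Bt.mulVec θstar i| ≤ M := by
    intro i
    rw [hMdef]
    exact le_ciSup (f := fun i => |Bt.mulVec θstar i|) (Set.Finite.bddAbove (Set.finite_range _)) i
  have hM0 : 0 ≤ M := by
    rcases isEmpty_or_nonempty (Fin N) with h | h
    · simp [hMdef, Real.iSup_of_isEmpty]
    · obtain ⟨i⟩ := h
      exact le_trans (abs_nonneg _) (hMbd i)
  -- quadratic part
  set w := B.mulVec (fun i => s i - sstar i) with hwdef
  have hys : B.mulVec (y - s) = fun j => θstar j - w j := by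
    have h1 : y - s = (y - sstar) - (fun i => s i - sstar i) := by
      funext i; simp
    funext j
    rw [h1, Matrix.mulVec_sub, ← hθ]
    rfl
  have hdp : ∑ j, θstar j * w j = ∑ i, Bt.mulVec θstar i * (s i - sstar i) := by
    have h2 := Matrix.dotProduct_mulVec θstar B (fun i => s i - sstar i)
    rw [← Matrix.mulVec_transpose, hBtB] at h2
    simpa [dotProduct, hwdef] using h2
  have habs : ∑ j, θstar j * w j ≤ M * L1 := by
    rw [hdp]
    calc ∑ i, Bt.mulVec θstar i * (s i - sstar i)
        ≤ ∑ i, |Bt.mulVec θstar i * (s i - sstar i)| :=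
          Finset.sum_le_sum fun i _ => le_abs_self _
      _ = ∑ i, |Bt.mulVec θstar i| * |s i - sstar i| := by simp [abs_mul]
      _ ≤ ∑ i, M * |s i - sstar i| :=
          Finset.sum_le_sum fun i _ => mul_le_mul_of_nonneg_right (hMbd i) (abs_nonneg _)
      _ = M * L1 := by rw [hL1def, Finset.mul_sum]
  have hqd : (1/2) * ∑ j, (B.mulVec (y - s) j)^2
      - (1/2) * ∑ j, (B.mulVec (y - sstar) j)^2 ≥ -(M * L1) := by
    rw [hys, ← hθ]
    have key : (1/2 : ℝ) * ∑ j, ((fun j => θstar j - w j) j)^2 - (1/2) * ∑ j, (θstar j)^2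
        = (1/2) * ∑ j, (w j)^2 - ∑ j, θstar j * w j := by
      have h1 : ∑ j, ((fun j => θstar j - w j) j)^2
          = ∑ j, ((θstar j)^2 - 2*(θstar j * w j) + (w j)^2) := by
        apply Finset.sum_congr rfl; intro j _; ring
      rw [h1, Finset.sum_add_distrib, Finset.sum_sub_distrib, ← Finset.mul_sum]
      ring
    have hw2 : (0:ℝ) ≤ (1/2) * ∑ j, (w j)^2 :=
      mul_nonneg (by norm_num) (Finset.sum_nonneg fun j _ => sq_nonneg _)
    rw [key]
    linarith [habs]
  -- ℓ¹ part
  set Sset := Finset.univ.filter (fun i => sstar i ≠ 0) with hSset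
  set T := ∑ i ∈ Ssetᶜ, |s i - sstar i| with hTdef
  have hnsp : ∑ i ∈ Sset, |s i - sstar i| ≤ ρ * T := hNSP _ hAv
  have hT0 : 0 ≤ T := Finset.sum_nonneg fun i _ => abs_nonneg _
  have hsplit : L1 = ∑ i ∈ Sset, |s i - sstar i| + T := by
    rw [hL1def, hTdef, Finset.sum_add_sum_compl]
  have hL1T : L1 ≤ (1 + ρ) * T := by
    have he : (1 + ρ) * T = T + ρ * T := by ring
    rw [hsplit, he]
    linarith
  have hl1 : ∑ i, |s i| - ∑ i, |sstar i| ≥ (1 - ρ) / (1 + ρ) * L1 := by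
    have hdiff : ∑ i, |s i| - ∑ i, |sstar i| = ∑ i, (|s i| - |sstar i|) := by
      rw [Finset.sum_sub_distrib]
    have hsplit2 : ∑ i, (|s i| - |sstar i|)
        = ∑ i ∈ Sset, (|s i| - |sstar i|) + ∑ i ∈ Ssetᶜ, (|s i| - |sstar i|) := by
      rw [Finset.sum_add_sum_compl]
    have hc : ∑ i ∈ Ssetᶜ, (|s i| - |sstar i|) = T := by
      rw [hTdef]
      apply Finset.sum_congr rfl
      intro i hi
      have : ¬ (sstar i ≠ 0) := by
        simpa [hSset] using hi
      have h0 : sstar i = 0 := not_not.mp this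
      rw [h0]; simp
    have hS : ∑ i ∈ Sset, (|s i| - |sstar i|) ≥ -∑ i ∈ Sset, |s i - sstar i| := by
      rw [← Finset.sum_neg_distrib]
      apply Finset.sum_le_sum
      intro i _
      have := abs_sub_abs_le_abs_sub (sstar i) (s i)
      rw [abs_sub_comm] at this
      linarith
    have step1 : ∑ i, |s i| - ∑ i, |sstar i| ≥ (1 - ρ) * T := by
      have he : (1 - ρ) * T = T - ρ * T := by ring
      rw [hdiff, hsplit2, hc, he]
      linarith
    have step2 : (1 - ρ) / (1 + ρ) * L1 ≤ (1 - ρ) * T := by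
      have h1ρ : (0:ℝ) < 1 + ρ := by linarith
      have h2 := mul_le_mul_of_nonneg_left hL1T (by linarith : (0:ℝ) ≤ 1 - ρ)
      have h3 : (1 - ρ) * ((1 + ρ) * T) = (1 - ρ) * T * (1 + ρ) := by ring
      rw [div_mul_eq_mul_div, div_le_iff₀ h1ρ]
      linarith
    linarith
  -- combine
  have hgd : g s - g sstar
      = ((1/2) * ∑ j, (B.mulVec (y - s) j)^2 - (1/2) * ∑ j, (B.mulVec (y - sstar) j)^2)
        + lam * (∑ i, |s i| - ∑ i, |sstar i|) := by
    rw [hg s, hg sstar]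
    ring
  have hlam1 : lam * (∑ i, |s i| - ∑ i, |sstar i|) ≥ lam * ((1 - ρ) / (1 + ρ) * L1) :=
    mul_le_mul_of_nonneg_left hl1 (le_of_lt hlam)
  have hML : M * L1 ≤ 2 * (M * L1) := by
    have := mul_nonneg hM0 hL1nn
    linarith
  have hrhs : (lam * (1 - ρ) / (1 + ρ) - 2 * M) * L1
      = lam * ((1 - ρ) / (1 + ρ) * L1) - 2 * (M * L1) := by ring
  rw [hgd, hrhs]
  linarith
end

section
/- Let J ∈ ℝ^{N×p} have rank r with compact SVD J = UΣVᵀ and coherence μ(J) = (N/r)·max_{1≤i≤N} ‖Uᵀe_i‖₂². Let A be a matrix whose null space equals the column space of U (in particular AJ = 0). If positive integers k and the constant ρ ∈ (0,1) satisfy k²r ≤ (N/μ(J))·(ρ/(ρ+1))², then A satisfies the null space property with constant ρ relative to every subset S ⊆ {1,…,N} with |S| = k. -/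
open Matrix

/-- If `J` has rank `r` with compact SVD `J = UΣVᵀ`, coherence
`μ(J) = (N/r)·maxᵢ ‖Uᵀeᵢ‖₂²`, `A` has null space equal to the column space of
`U`, and `k² r ≤ (N/μ(J))·(ρ/(ρ+1))²`, then `A` satisfies the null space
property with constant `ρ` relative to every `S` with `|S| = k`. -/
theorem stmt_8 (N p r m : ℕ) (hN : 0 < N) (hr : 0 < r)
    (U : Matrix (Fin N) (Fin r) ℝ) (V : Matrix (Fin p) (Fin r) ℝ) (σ : Fin r → ℝ)
    (hU : Uᵀ * U = 1) (hV : Vᵀ * V = 1) (hσ : ∀ i, 0 < σ i)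
    (J : Matrix (Fin N) (Fin p) ℝ) (hJ : J = U * Matrix.diagonal σ * Vᵀ)
    (A : Matrix (Fin m) (Fin N) ℝ) (hAJ : A * J = 0)
    (hker : ∀ w : Fin N → ℝ, A.mulVec w = 0 ↔ ∃ a : Fin r → ℝ, w = U.mulVec a)
    (μ : ℝ) (hμ : μ = ((N : ℝ) / r) * ⨆ i : Fin N, ∑ j, (U i j) ^ 2)
    (k : ℕ) (hk : 0 < k) (ρ : ℝ) (hρ : ρ ∈ Set.Ioo (0 : ℝ) 1)
    (hcond : (k : ℝ) ^ 2 * r ≤ ((N : ℝ) / μ) * (ρ / (ρ + 1)) ^ 2) :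
    ∀ S : Finset (Fin N), S.card = k →
      ∀ v : Fin N → ℝ, A.mulVec v = 0 →
        ∑ i ∈ S, |v i| ≤ ρ * ∑ i ∈ Sᶜ, |v i| := by
  intro S hS v hv
  obtain ⟨a, ha⟩ := (hker v).1 hv
  -- entries of UᵀU
  have hUU : ∀ j l : Fin r, (∑ i, U i j * U i l) = if j = l then (1:ℝ) else 0 := by
    intro j l
    have := congrFun (congrFun hU j) l
    simpa [Matrix.mul_apply, Matrix.transpose_apply, Matrix.one_apply] using this
  have hvi : ∀ i, v i = ∑ j, U i j * a j := by
    intro i; rw [ha]; simp [Matrix.mulVec, dotProduct]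
  -- ∑ v² = ∑ a²
  have hnorm : ∑ i, v i ^ 2 = ∑ j, a j ^ 2 := by
    calc ∑ i, v i ^ 2 = ∑ i, ∑ j, ∑ l, (a j * a l) * (U i j * U i l) := by
          refine Finset.sum_congr rfl fun i _ => ?_
          rw [hvi i, sq, Finset.sum_mul_sum]
          refine Finset.sum_congr rfl fun j _ => Finset.sum_congr rfl fun l _ => by ring
      _ = ∑ j, ∑ l, (a j * a l) * ∑ i, U i j * U i l := by
          rw [Finset.sum_comm]
          refine Finset.sum_congr rfl fun j _ => ?_
          rw [Finset.sum_comm]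
          refine Finset.sum_congr rfl fun l _ => ?_
          rw [Finset.mul_sum]
      _ = ∑ j, a j ^ 2 := by
          refine Finset.sum_congr rfl fun j _ => ?_
          rw [Finset.sum_eq_single j]
          · rw [hUU j j]; simp [sq]
          · intro l _ hl; rw [hUU j l, if_neg (Ne.symm hl), mul_zero]
          · intro h; exact absurd (Finset.mem_univ j) h
  set M : ℝ := ⨆ i : Fin N, ∑ j, (U i j) ^ 2 with hM
  have hrow : ∀ i, ∑ j, (U i j) ^ 2 ≤ M := fun i =>
    le_ciSup (f := fun i : Fin N => ∑ j, (U i j) ^ 2)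
      (Set.Finite.bddAbove (Set.finite_range _)) i
  -- M > 0
  have hMpos : 0 < M := by
    have htr : ∑ i, ∑ j, (U i j) ^ 2 = (r : ℝ) := by
      rw [Finset.sum_comm]
      have : ∀ j : Fin r, ∑ i, (U i j) ^ 2 = 1 := by
        intro j
        have := hUU j j
        simpa [sq] using this
      simp [this]
    by_contra h
    push_neg at h
    have : ∑ i, ∑ j, (U i j) ^ 2 ≤ 0 := by
      calc ∑ i, ∑ j, (U i j) ^ 2 ≤ ∑ _i : Fin N, M :=
            Finset.sum_le_sum fun i _ => hrow i
        _ = N * M := by simp [mul_comm]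
        _ ≤ 0 := mul_nonpos_of_nonneg_of_nonpos (by positivity) h
    rw [htr] at this
    have hrpos' : (0:ℝ) < r := by exact_mod_cast hr
    linarith
  -- key bound: k² M ≤ (ρ/(ρ+1))²
  have hμval : μ = (N : ℝ) / r * M := hμ
  have hNpos : (0:ℝ) < N := by exact_mod_cast hN
  have hrpos : (0:ℝ) < r := by exact_mod_cast hr
  have hμpos : 0 < μ := by rw [hμval]; positivity
  have hkey : (k : ℝ) ^ 2 * M ≤ (ρ / (ρ + 1)) ^ 2 := by
    have hNμ : (N : ℝ) / μ = r / M := by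
      rw [hμval]; field_simp
    rw [hNμ] at hcond
    have := mul_le_mul_of_nonneg_right hcond (le_of_lt (by positivity : (0:ℝ) < M / r))
    calc (k:ℝ) ^ 2 * M = (k:ℝ)^2 * r * (M / r) := by field_simp
      _ ≤ r / M * (ρ / (ρ + 1)) ^ 2 * (M / r) := this
      _ = (ρ / (ρ + 1)) ^ 2 := by
          rw [mul_comm ((r:ℝ) / M) _, mul_assoc, div_mul_div_comm,
            mul_comm (r:ℝ) M, div_self (by positivity : M * (r:ℝ) ≠ 0), mul_one]
  set T : ℝ := ∑ i, |v i| with hT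
  have hTnn : 0 ≤ T := Finset.sum_nonneg fun i _ => abs_nonneg _
  -- pointwise bound |v i| ≤ √M * T
  have hpt : ∀ i, |v i| ≤ Real.sqrt M * T := by
    intro i
    have hcs : v i ^ 2 ≤ (∑ j, (U i j) ^ 2) * ∑ j, a j ^ 2 := by
      rw [hvi i]
      exact Finset.sum_mul_sq_le_sq_mul_sq _ _ _
    have hl1 : ∑ j, a j ^ 2 ≤ T ^ 2 := by
      rw [← hnorm]
      calc ∑ i, v i ^ 2 = ∑ i, |v i| ^ 2 := by simp [sq_abs]
        _ ≤ T ^ 2 := by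
            rw [hT, sq]
            rw [Finset.sum_mul_sum]
            refine Finset.sum_le_sum fun i _ => ?_
            rw [sq]
            exact Finset.single_le_sum (f := fun l => |v i| * |v l|)
              (fun l _ => mul_nonneg (abs_nonneg _) (abs_nonneg _)) (Finset.mem_univ i)
    have h2 : v i ^ 2 ≤ M * T ^ 2 := by
      calc v i ^ 2 ≤ (∑ j, (U i j) ^ 2) * ∑ j, a j ^ 2 := hcs
        _ ≤ M * T ^ 2 := by
            apply mul_le_mul (hrow i) hl1 (Finset.sum_nonneg fun j _ => sq_nonneg _) hMpos.le
    calc |v i| = Real.sqrt (v i ^ 2) := (Real.sqrt_sq_eq_abs _).symm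
      _ ≤ Real.sqrt (M * T ^ 2) := Real.sqrt_le_sqrt h2
      _ = Real.sqrt M * T := by
          rw [Real.sqrt_mul hMpos.le, Real.sqrt_sq hTnn]
  -- ∑_S |v| ≤ k √M T ≤ ρ/(ρ+1) T
  have hsum : ∑ i ∈ S, |v i| ≤ (k : ℝ) * Real.sqrt M * T := by
    calc ∑ i ∈ S, |v i| ≤ ∑ _i ∈ S, Real.sqrt M * T :=
          Finset.sum_le_sum fun i _ => hpt i
      _ = (k : ℝ) * Real.sqrt M * T := by rw [Finset.sum_const, hS]; push_cast; ring
  have hkM : (k : ℝ) * Real.sqrt M ≤ ρ / (ρ + 1) := by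
    have h1 : ((k : ℝ) * Real.sqrt M) ^ 2 ≤ (ρ / (ρ + 1)) ^ 2 := by
      rw [mul_pow, Real.sq_sqrt hMpos.le]
      exact hkey
    have hρnn : 0 ≤ ρ / (ρ + 1) := by
      have := hρ.1
      positivity
    nlinarith [mul_nonneg (Nat.cast_nonneg k : (0:ℝ) ≤ k) (Real.sqrt_nonneg M)]
  have hfinal : ∑ i ∈ S, |v i| ≤ ρ / (ρ + 1) * T :=
    hsum.trans (mul_le_mul_of_nonneg_right hkM hTnn)
  have hsplit : T = ∑ i ∈ S, |v i| + ∑ i ∈ Sᶜ, |v i| := by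
    rw [hT, ← Finset.sum_add_sum_compl S]
  rw [hsplit] at hfinal
  have hρ1 : 0 < ρ + 1 := by linarith [hρ.1]
  rw [div_mul_eq_mul_div, le_div_iff₀ hρ1, mul_add, mul_add, mul_one, mul_comm ρ _] at hfinal
  linarith
end

section
/- (Exact recovery under incoherence.) Let J ∈ ℝ^{N×p} have rank r and coherence μ(J), let s⋆ ∈ ℝ^N have exactly k nonzero entries, set y = Jθ⋆ + s⋆ where θ⋆ is the minimum ℓ₂-norm vector satisfying y = Jθ + s⋆ (equivalently, θ⋆ = VΣ⁻¹Uᵀ(y − s⋆) for the compact SVD J = UΣVᵀ). If k²r < N/(4μ(J)), then there exists λ₀ > 0, depending only on (J, θ⋆, k), such that for every λ > λ₀, the unique optimal solution to the convex program minimize (1/2)‖θ‖₂² + λ‖s‖₁ subject to y = Jθ + s is (θ⋆, s⋆). -/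
open Matrix

set_option maxHeartbeats 1000000
open Matrix

lemma cs_abs' {n : ℕ} (f g : Fin n → ℝ) :
    |∑ i, f i * g i| ≤ Real.sqrt (∑ i, f i ^ 2) * Real.sqrt (∑ i, g i ^ 2) := by
  have h := Finset.sum_mul_sq_le_sq_mul_sq Finset.univ f g
  have h1 : |∑ i, f i * g i| = Real.sqrt ((∑ i, f i * g i) ^ 2) := by
    rw [Real.sqrt_sq_eq_abs]
  rw [h1, ← Real.sqrt_mul (by positivity)]
  exact Real.sqrt_le_sqrt h

lemma sqrt_sum_sq_le_sum_abs' {n : ℕ} (g : Fin n → ℝ) :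
    Real.sqrt (∑ i, g i ^ 2) ≤ ∑ i, |g i| := by
  have h : ∑ i, g i ^ 2 ≤ (∑ i, |g i|) ^ 2 := by
    calc ∑ i, g i ^ 2 ≤ ∑ i, |g i| * ∑ j, |g j| := by
          refine Finset.sum_le_sum fun i _ => ?_
          have h1 : |g i| ≤ ∑ j, |g j| :=
            Finset.single_le_sum (f := fun j => |g j|) (fun j _ => abs_nonneg _)
              (Finset.mem_univ i)
          nlinarith [abs_nonneg (g i), sq_abs (g i)]
      _ = (∑ i, |g i|) ^ 2 := by rw [← Finset.sum_mul]; ring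
  calc Real.sqrt (∑ i, g i ^ 2) ≤ Real.sqrt ((∑ i, |g i|) ^ 2) := Real.sqrt_le_sqrt h
    _ = ∑ i, |g i| := by rw [Real.sqrt_sq (by positivity)]

/-- Exact recovery under incoherence: if `J` has rank `r` with
compact SVD `J = UΣVᵀ` and coherence `μ(J)`, `s⋆` has exactly `k` nonzero
entries, `θ⋆ = VΣ⁻¹Uᵀ(y − s⋆)` with `y = Jθ⋆ + s⋆`, and `k² r < N/(4μ(J))`,
then there is `λ₀ > 0` (depending only on `(J, θ⋆, k)`) such that for all
`λ > λ₀`, `(θ⋆, s⋆)` is the unique optimal solution of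
`min (1/2)‖θ‖₂² + λ‖s‖₁ s.t. y = Jθ + s`. -/
theorem stmt_10 (N p r : ℕ) (hN : 0 < N) (hr : 0 < r)
    (U : Matrix (Fin N) (Fin r) ℝ) (V : Matrix (Fin p) (Fin r) ℝ) (σ : Fin r → ℝ)
    (hU : Uᵀ * U = 1) (hV : Vᵀ * V = 1) (hσ : ∀ i, 0 < σ i)
    (J : Matrix (Fin N) (Fin p) ℝ) (hJ : J = U * Matrix.diagonal σ * Vᵀ)
    (y sstar : Fin N → ℝ) (θstar : Fin p → ℝ)
    (hθ : θstar = (V * Matrix.diagonal (fun i => (σ i)⁻¹) * Uᵀ).mulVec (y - sstar))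
    (hy : y = J.mulVec θstar + sstar)
    (k : ℕ) (hsupp : (Finset.univ.filter (fun i => sstar i ≠ 0)).card = k)
    (μ : ℝ) (hμ : μ = ((N : ℝ) / r) * ⨆ i : Fin N, ∑ j, (U i j) ^ 2)
    (hcond : (k : ℝ) ^ 2 * r < (N : ℝ) / (4 * μ)) :
    ∃ lam0 : ℝ, 0 < lam0 ∧ ∀ lam : ℝ, lam0 < lam →
      ∀ (θ : Fin p → ℝ) (s : Fin N → ℝ), y = J.mulVec θ + s →
        (θ, s) ≠ (θstar, sstar) →
        (1 / 2) * ∑ j, (θstar j) ^ 2 + lam * ∑ i, |sstar i| <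
        (1 / 2) * ∑ j, (θ j) ^ 2 + lam * ∑ i, |s i| := by
  classical
  -- μ is positive
  have hμpos : 0 < μ := by
    by_contra hcon
    push_neg at hcon
    have h1 : (N : ℝ) / (4 * μ) ≤ 0 := by
      rcases lt_or_eq_of_le hcon with h | h
      · exact le_of_lt (div_neg_of_pos_of_neg (by exact_mod_cast hN) (by linarith))
      · rw [h]; norm_num
    have h2 : (0 : ℝ) ≤ (k : ℝ) ^ 2 * r := by positivity
    linarith
  -- θstar = V * u
  set u : Fin r → ℝ := (Matrix.diagonal (fun i => (σ i)⁻¹) * Uᵀ).mulVec (y - sstar) with hu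
  have hθV : θstar = V.mulVec u := by
    rw [hθ, hu, mulVec_mulVec, Matrix.mul_assoc]
  -- smallest singular value
  have hne : (Finset.univ : Finset (Fin r)).Nonempty := ⟨⟨0, hr⟩, Finset.mem_univ _⟩
  set m : ℝ := Finset.univ.inf' hne σ with hmdef
  have hm : 0 < m := (Finset.lt_inf'_iff hne).2 fun i _ => hσ i
  have hmle : ∀ i, m ≤ σ i := fun i => Finset.inf'_le _ (Finset.mem_univ i)
  -- incoherence constants
  set a : ℝ := Real.sqrt (μ * r / N) with hadef
  have ha0 : 0 ≤ a := Real.sqrt_nonneg _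
  have hasq : a ^ 2 = μ * r / N := Real.sq_sqrt (by positivity)
  set c : ℝ := 1 - 2 * k * a with hcdef
  have hc : 0 < c := by
    have h1 : (k : ℝ) ^ 2 * r * (4 * μ) < N := (lt_div_iff₀ (by linarith : (0:ℝ) < 4 * μ)).1 hcond
    have h2 : (2 * k * a) ^ 2 < 1 := by
      have hN' : (0 : ℝ) < N := by exact_mod_cast hN
      have heq : (2 * k * a) ^ 2 = 4 * (k : ℝ) ^ 2 * μ * r / N := by
        rw [mul_pow, mul_pow, hasq]; ring
      rw [heq, div_lt_iff₀ hN']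
      nlinarith
    nlinarith [mul_nonneg (mul_nonneg (by norm_num : (0:ℝ) ≤ 2) (Nat.cast_nonneg k)) ha0]
  -- row bound from coherence
  have hrow : ∀ i, ∑ j, U i j ^ 2 ≤ μ * r / N := by
    intro i
    have hb : BddAbove (Set.range fun i : Fin N => ∑ j, U i j ^ 2) :=
      Set.Finite.bddAbove (Set.finite_range _)
    have h1 : ∑ j, U i j ^ 2 ≤ ⨆ i : Fin N, ∑ j, U i j ^ 2 := le_ciSup hb i
    have hr' : (0 : ℝ) < r := by exact_mod_cast hr
    have hN' : (0 : ℝ) < N := by exact_mod_cast hN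
    have h2 : μ * r / N = ⨆ i : Fin N, ∑ j, U i j ^ 2 := by
      rw [hμ]; field_simp
    linarith
  -- norm of u
  set nu : ℝ := Real.sqrt (∑ i, u i ^ 2) with hnudef
  have hnu0 : 0 ≤ nu := Real.sqrt_nonneg _
  refine ⟨(nu / m + 1) / c, by positivity, ?_⟩
  intro lam hlam θ s hfeas hne2
  have hlam0 : 0 < lam := lt_trans (by positivity) hlam
  have hlamc : nu / m + 1 < lam * c := (div_lt_iff₀ hc).1 hlam
  -- set up δ, v, w
  set δ : Fin p → ℝ := fun j => θ j - θstar j with hδdef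
  set v : Fin r → ℝ := Vᵀ.mulVec δ with hvdef
  set w : Fin r → ℝ := fun i => σ i * v i with hwdef
  have hθeq : θ = fun j => θstar j + δ j := by funext j; simp [hδdef]
  -- J δ = U w
  have hg : J.mulVec δ = U.mulVec w := by
    have hw2 : w = (Matrix.diagonal σ).mulVec (Vᵀ.mulVec δ) := by
      funext i; simp [hwdef, mulVec_diagonal, hvdef]
    rw [hw2, mulVec_mulVec, mulVec_mulVec, ← hJ]
  set g : Fin N → ℝ := U.mulVec w with hgdef
  -- s = sstar - g
  have hs : s = fun i => sstar i - g i := by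
    funext i
    have h1 : J.mulVec θ i = J.mulVec θstar i + g i := by
      rw [← hg, hθeq]
      have : (fun j => θstar j + δ j) = θstar + δ := rfl
      rw [this, mulVec_add]; rfl
    have h2 := congrFun hfeas i
    have h3 := congrFun hy i
    simp only [Pi.add_apply] at h2 h3
    rw [h1] at h2
    linarith
  -- ∑ g² = ∑ w²
  have hgw : ∑ i, g i ^ 2 = ∑ i, w i ^ 2 := by
    have h1 : ∑ i, g i ^ 2 = g ⬝ᵥ g := by simp [dotProduct, sq]
    have h2 : ∑ i, w i ^ 2 = w ⬝ᵥ w := by simp [dotProduct, sq]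
    rw [h1, h2, hgdef]
    rw [dotProduct_mulVec, ← mulVec_transpose, mulVec_mulVec, hU, one_mulVec]
  -- θ⋆ ⬝ δ = u ⬝ v
  have hdot : ∑ j, θstar j * δ j = ∑ i, u i * v i := by
    have h1 : ∑ j, θstar j * δ j = θstar ⬝ᵥ δ := rfl
    have h2 : ∑ i, u i * v i = v ⬝ᵥ u := by simp [dotProduct, mul_comm]
    rw [h1, h2, hθV, hvdef, mulVec_transpose, ← dotProduct_mulVec, dotProduct_comm]
  set W : ℝ := Real.sqrt (∑ i, w i ^ 2) with hWdef
  have hW0 : 0 ≤ W := Real.sqrt_nonneg _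
  set nv : ℝ := Real.sqrt (∑ i, v i ^ 2) with hnvdef
  -- m * nv ≤ W
  have hmv : m * nv ≤ W := by
    have h1 : m ^ 2 * ∑ i, v i ^ 2 ≤ ∑ i, w i ^ 2 := by
      rw [Finset.mul_sum]
      refine Finset.sum_le_sum fun i _ => ?_
      have := hmle i
      have := hσ i
      simp only [hwdef]
      nlinarith [sq_nonneg (v i), mul_self_le_mul_self hm.le (hmle i)]
    calc m * nv = Real.sqrt (m ^ 2 * ∑ i, v i ^ 2) := by
          rw [Real.sqrt_mul (by positivity), Real.sqrt_sq hm.le]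
      _ ≤ W := Real.sqrt_le_sqrt h1
  -- per-entry bound on g
  have hgi : ∀ i, |g i| ≤ a * W := by
    intro i
    have h1 : g i = ∑ j, U i j * w j := rfl
    have h2 : |g i| ≤ Real.sqrt (∑ j, U i j ^ 2) * W := by rw [h1]; exact cs_abs' _ _
    have h3 : Real.sqrt (∑ j, U i j ^ 2) ≤ a := by
      rw [hadef]; exact Real.sqrt_le_sqrt (hrow i)
    calc |g i| ≤ Real.sqrt (∑ j, U i j ^ 2) * W := h2
      _ ≤ a * W := mul_le_mul_of_nonneg_right h3 hW0
  -- ℓ¹ lower bound on total |g|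
  have hgl1 : W ≤ ∑ i, |g i| := by
    rw [hWdef, ← hgw]; exact sqrt_sum_sq_le_sum_abs' g
  -- support sum bound
  have hTsum : ∑ i ∈ Finset.univ.filter (fun i => sstar i ≠ 0), |g i| ≤ k * (a * W) := by
    calc ∑ i ∈ Finset.univ.filter (fun i => sstar i ≠ 0), |g i|
        ≤ (Finset.univ.filter (fun i => sstar i ≠ 0)).card • (a * W) :=
          Finset.sum_le_card_nsmul _ _ _ (fun i _ => hgi i)
      _ = k * (a * W) := by rw [hsupp, nsmul_eq_mul]
  -- ℓ¹ difference bound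
  have hl1 : c * W ≤ ∑ i, |s i| - ∑ i, |sstar i| := by
    have hpt : ∀ i, |g i| - 2 * (if sstar i ≠ 0 then |g i| else 0) ≤ |s i| - |sstar i| := by
      intro i
      rw [hs]
      by_cases h : sstar i ≠ 0
      · simp only [if_pos h]
        have := abs_sub_abs_le_abs_sub (sstar i) (g i)
        have := abs_sub_comm (sstar i) (g i)
        have h4 : |sstar i - g i| ≥ |sstar i| - |g i| := abs_sub_abs_le_abs_sub _ _
        linarith [abs_nonneg (g i)]
      · push_neg at h
        simp [h]
    have hsum := Finset.sum_le_sum (fun i (_ : i ∈ Finset.univ) => hpt i)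
    rw [Finset.sum_sub_distrib, Finset.sum_sub_distrib, ← Finset.mul_sum] at hsum
    rw [← Finset.sum_filter (fun i => sstar i ≠ 0) (fun i => |g i|)] at hsum
    have : c * W = W - 2 * (k * (a * W)) := by rw [hcdef]; ring
    rw [this]
    linarith
  -- quadratic expansion
  have hquad : (1 / 2 : ℝ) * ∑ j, θ j ^ 2 =
      (1 / 2) * ∑ j, θstar j ^ 2 + ∑ j, θstar j * δ j + (1 / 2) * ∑ j, δ j ^ 2 := by
    rw [hθeq]
    rw [show (∑ j, (θstar j + δ j) ^ 2) = ∑ j, (θstar j ^ 2 + 2 * (θstar j * δ j) + δ j ^ 2)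
      from Finset.sum_congr rfl fun j _ => by ring]
    rw [Finset.sum_add_distrib, Finset.sum_add_distrib, ← Finset.mul_sum]
    ring
  -- δ ≠ 0
  have hδne : 0 < ∑ j, δ j ^ 2 := by
    by_contra hcon
    push_neg at hcon
    have hz : ∀ j, δ j = 0 := by
      intro j
      have h1 : ∑ j, δ j ^ 2 = 0 :=
        le_antisymm hcon (Finset.sum_nonneg fun j _ => sq_nonneg _)
      have h2 := (Finset.sum_eq_zero_iff_of_nonneg (fun j _ => sq_nonneg (δ j))).1 h1 j
        (Finset.mem_univ j)
      exact pow_eq_zero_iff (by norm_num) |>.1 h2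
    apply hne2
    have hθ' : θ = θstar := by funext j; have := hz j; simp [hδdef] at this; linarith
    have hg0 : ∀ i, g i = 0 := by
      intro i
      have h4 : g i = ∑ j, U i j * w j := rfl
      have h5 : ∀ t, w t = 0 := by
        intro t
        have h6 : v t = ∑ j, Vᵀ t j * δ j := rfl
        have h7 : v t = 0 := by rw [h6]; simp [hz]
        have h8 : w t = σ t * v t := rfl
        rw [h8, h7, mul_zero]
      rw [h4]
      simp [h5]
    have hs' : s = sstar := by funext i; rw [hs]; simp [hg0 i]
    rw [hθ', hs']
  -- inner product bound
  have hin : -(nu / m * W) ≤ ∑ j, θstar j * δ j := by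
    rw [hdot]
    have h1 : |∑ i, u i * v i| ≤ nu * nv := cs_abs' u v
    have h2 : nu * nv ≤ nu / m * W := by
      rw [div_mul_eq_mul_div, le_div_iff₀ hm]
      calc nu * nv * m = nu * (m * nv) := by ring
        _ ≤ nu * W := mul_le_mul_of_nonneg_left hmv hnu0
    have := neg_abs_le (∑ i, u i * v i)
    linarith
  -- final assembly
  have hA1 : lam * (c * W) ≤ lam * (∑ i, |s i| - ∑ i, |sstar i|) :=
    mul_le_mul_of_nonneg_left hl1 hlam0.le
  have hA2 : (nu / m + 1) * W ≤ lam * (c * W) := by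
    rw [← mul_assoc]
    exact mul_le_mul_of_nonneg_right hlamc.le hW0
  clear_value u m a c nu δ v w g W nv
  have hfin : 0 < ∑ j, θstar j * δ j + (1/2) * ∑ j, δ j ^ 2 + lam * ((∑ i, |s i|) - ∑ i, |sstar i|) := by
    linarith [hA1, hA2, hin, hδne, hW0]
  linarith [hquad, hfin]
end

section
/- (Global convergence of the gradient flow.) Let J ∈ ℝ^{N×p}, y ∈ ℝ^N, γ > 0, α > 0. Suppose (θ_t, u_t, v_t) for t ≥ 0 are differentiable curves in ℝ^p × ℝ^N × ℝ^N satisfying the gradient flow θ'_t = −Jᵀ r_t, u'_t = −2α u_t ⊙ r_t, v'_t = 2α v_t ⊙ r_t, where r_t = Jθ_t + u_t⊙u_t − v_t⊙v_t − y, with initialization θ₀ = 0, u₀ = γ·1, v₀ = γ·1 (all entries γ). If the limit (θ_∞, u_∞, v_∞) = lim_{t→∞} (θ_t, u_t, v_t) exists, then (θ_∞, u_∞, v_∞) is a global minimizer of h(θ, u, v) = (1/2)‖Jθ + u⊙u − v⊙v − y‖₂²; in particular J θ_∞ + u_∞⊙u_∞ − v_∞⊙v_∞ = y. -/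
/-!
Each product `u_i v_i` is conserved along the flow, since `u_i' = -2α r_i u_i` and
`v_i' = 2α r_i v_i`; hence `u∞_i v∞_i = γ²` and `u∞_i ≠ 0`. A convergent curve whose velocity
converges must have limiting velocity zero, so `-2α u∞ ⊙ r∞ = 0`, which forces the residual
`r∞` at the limit to vanish. A zero residual is a global minimum of `h ≥ 0`.
-/

open Filter Topology

theorem eq_zero_of_tendsto_of_hasDerivAt {E : Type*} [NormedAddCommGroup E] [NormedSpace ℝ E]
    {f f' : ℝ → E} {L c : E} (hf : ∀ᶠ t in atTop, HasDerivAt f (f' t) t)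
    (hfL : Tendsto f atTop (𝓝 L)) (hf'c : Tendsto f' atTop (𝓝 c)) : c = 0 := by
  -- the increments `f (t + 1) - f t` tend both to `L - L` and, by the mean value inequality, to `c`
  have hincr : Tendsto (fun t => f (t + 1) - f t - c) atTop (𝓝 0) := by
    refine Metric.tendsto_atTop.2 fun ε hε => ?_
    obtain ⟨T, hT⟩ := eventually_atTop.1 <|
      hf.and (hf'c.eventually (Metric.closedBall_mem_nhds c (half_pos hε)))
    refine ⟨T, fun t ht => ?_⟩
    have hmv := norm_image_sub_le_of_norm_deriv_le_segment' (f := fun s => f s - s • c)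
      (f' := fun s => f' s - c) (C := ε / 2) (a := t) (b := t + 1)
      (fun s hs => (((hT s (ht.trans hs.1)).1).sub
        ((hasDerivAt_id s).smul_const c |>.congr_deriv (one_smul ℝ c))).hasDerivWithinAt)
      (fun s hs => by simpa [dist_eq_norm] using (hT s (ht.trans hs.1)).2)
      (t + 1) ⟨by linarith, le_rfl⟩
    rw [dist_zero_right]
    calc ‖f (t + 1) - f t - c‖ = ‖f (t + 1) - (t + 1) • c - (f t - t • c)‖ := by
          rw [add_smul, one_smul]; congr 1; abel
      _ ≤ ε / 2 * (t + 1 - t) := hmv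
      _ < ε := by linarith
  have hshift : Tendsto (fun t => f (t + 1) - f t - c) atTop (𝓝 (L - L - c)) :=
    ((hfL.comp (tendsto_atTop_add_const_right _ 1 tendsto_id)).sub hfL).sub_const c
  simpa using tendsto_nhds_unique hshift hincr

theorem mul_eq_of_hasDerivAt_neg_mul {f g a : ℝ → ℝ} {t₀ T : ℝ} (hT : t₀ ≤ T)
    (hf : ∀ t ∈ Set.Icc t₀ T, HasDerivAt f (-a t * f t) t)
    (hg : ∀ t ∈ Set.Icc t₀ T, HasDerivAt g (a t * g t) t) : f T * g T = f t₀ * g t₀ := by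
  have hfg : ∀ t ∈ Set.Icc t₀ T, HasDerivAt (fun s => f s * g s) 0 t := fun t ht =>
    ((hf t ht).mul (hg t ht)).congr_deriv (by ring)
  exact constant_of_has_deriv_right_zero
    (fun t ht => (hfg t ht).continuousAt.continuousWithinAt)
    (fun t ht => (hfg t (Set.Ico_subset_Icc_self ht)).hasDerivWithinAt) T ⟨hT, le_rfl⟩

def quadResidual {m n : Type*} [Fintype n] (J : Matrix m n ℝ) (y : m → ℝ)
    (x : (n → ℝ) × (m → ℝ) × (m → ℝ)) : m → ℝ :=
  J.mulVec x.1 + x.2.1 * x.2.1 - x.2.2 * x.2.2 - y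

theorem continuous_quadResidual {m n : Type*} [Fintype n] (J : Matrix m n ℝ) (y : m → ℝ) :
    Continuous (quadResidual J y) :=
  (((continuous_const.matrix_mulVec continuous_fst).add
    ((continuous_fst.comp continuous_snd).mul (continuous_fst.comp continuous_snd))).sub
    ((continuous_snd.comp continuous_snd).mul (continuous_snd.comp continuous_snd))).sub
    continuous_const

theorem stmt_11_general (N p : ℕ) (J : Matrix (Fin N) (Fin p) ℝ) (y : Fin N → ℝ)
    (γ α : ℝ) (hγ : 0 < γ) (hα : 0 < α)
    (θ : ℝ → Fin p → ℝ) (u v : ℝ → Fin N → ℝ) (r : ℝ → Fin N → ℝ)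
    (hrdef : ∀ t : ℝ, r t = fun i =>
      J.mulVec (θ t) i + u t i * u t i - v t i * v t i - y i)
    (hu' : ∀ t : ℝ, 0 ≤ t →
      HasDerivAt u (fun i => -(2 * α) * (u t i * r t i)) t)
    (hv' : ∀ t : ℝ, 0 ≤ t →
      HasDerivAt v (fun i => (2 * α) * (v t i * r t i)) t)
    (hu0 : u 0 = fun _ => γ) (hv0 : v 0 = fun _ => γ)
    (θinf : Fin p → ℝ) (uinf vinf : Fin N → ℝ)
    (hlim : Tendsto (fun t => (θ t, u t, v t)) atTop (𝓝 (θinf, uinf, vinf))) :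
    (∀ (θ' : Fin p → ℝ) (u' v' : Fin N → ℝ),
      (1 / 2) * ∑ i, (J.mulVec θinf i + uinf i * uinf i - vinf i * vinf i - y i) ^ 2 ≤
      (1 / 2) * ∑ i, (J.mulVec θ' i + u' i * u' i - v' i * v' i - y i) ^ 2) ∧
    (fun i => J.mulVec θinf i + uinf i * uinf i - vinf i * vinf i) = y := by
  set rinf := quadResidual J y (θinf, uinf, vinf)
  have hr_lim : Tendsto r atTop (𝓝 rinf) := by
    have hr : r = quadResidual J y ∘ fun t => (θ t, u t, v t) := funext fun t => hrdef t
    exact hr ▸ ((continuous_quadResidual J y).tendsto _).comp hlim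
  have hu_lim : Tendsto u atTop (𝓝 uinf) := hlim.snd_nhds.fst_nhds
  have hv_lim : Tendsto v atTop (𝓝 vinf) := hlim.snd_nhds.snd_nhds
  have hstat : ∀ i, -(2 * α) * (uinf i * rinf i) = 0 := congrFun <|
    eq_zero_of_tendsto_of_hasDerivAt ((eventually_ge_atTop 0).mono hu') hu_lim <|
      tendsto_pi_nhds.2 fun i =>
        (((tendsto_pi_nhds.1 hu_lim i).mul (tendsto_pi_nhds.1 hr_lim i)).const_mul _)
  have hconserved : ∀ i, uinf i * vinf i = γ * γ := fun i => by
    refine tendsto_nhds_unique ((tendsto_pi_nhds.1 hu_lim i).mul (tendsto_pi_nhds.1 hv_lim i))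
      (tendsto_const_nhds.congr' ((eventually_ge_atTop 0).mono fun T hT => ?_))
    have := mul_eq_of_hasDerivAt_neg_mul (a := fun t => 2 * α * r t i) hT
      (fun t ht => (hasDerivAt_pi.1 (hu' t ht.1) i).congr_deriv (by ring))
      (fun t ht => (hasDerivAt_pi.1 (hv' t ht.1) i).congr_deriv (by ring))
    simp only [this, hu0, hv0]
  have hrinf : ∀ i, rinf i = 0 := fun i => by
    have huinf : uinf i ≠ 0 := left_ne_zero_of_mul (hconserved i ▸ mul_self_ne_zero.2 hγ.ne')
    simpa [hα.ne', huinf] using hstat i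
  have hres : ∀ i, J.mulVec θinf i + uinf i * uinf i - vinf i * vinf i - y i = 0 := hrinf
  refine ⟨fun θ' u' v' => ?_, funext fun i => sub_eq_zero.1 (hres i)⟩
  simp only [hres, zero_pow two_ne_zero, Finset.sum_const_zero, mul_zero]
  positivity

/-- Global convergence of the gradient flow: if the curves
`(θ_t, u_t, v_t)` follow the gradient flow
`θ' = −Jᵀr`, `u' = −2α u⊙r`, `v' = 2α v⊙r` with `r = Jθ + u⊙u − v⊙v − y`,
initialized at `θ₀ = 0`, `u₀ = v₀ = γ·1`, and the limit `(θ∞, u∞, v∞)` as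
`t → ∞` exists, then the limit is a global minimizer of
`h(θ,u,v) = (1/2)‖Jθ + u⊙u − v⊙v − y‖₂²`; in particular its residual is zero. -/
theorem stmt_11 (N p : ℕ) (J : Matrix (Fin N) (Fin p) ℝ) (y : Fin N → ℝ)
    (γ α : ℝ) (hγ : 0 < γ) (hα : 0 < α)
    (θ : ℝ → Fin p → ℝ) (u v : ℝ → Fin N → ℝ) (r : ℝ → Fin N → ℝ)
    (hrdef : ∀ t : ℝ, r t = fun i =>
      J.mulVec (θ t) i + u t i * u t i - v t i * v t i - y i)
    (hθ' : ∀ t : ℝ, 0 ≤ t → HasDerivAt θ (-(J.transpose.mulVec (r t))) t)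
    (hu' : ∀ t : ℝ, 0 ≤ t →
      HasDerivAt u (fun i => -(2 * α) * (u t i * r t i)) t)
    (hv' : ∀ t : ℝ, 0 ≤ t →
      HasDerivAt v (fun i => (2 * α) * (v t i * r t i)) t)
    (hθ0 : θ 0 = 0) (hu0 : u 0 = fun _ => γ) (hv0 : v 0 = fun _ => γ)
    (θinf : Fin p → ℝ) (uinf vinf : Fin N → ℝ)
    (hlim : Tendsto (fun t => (θ t, u t, v t)) atTop (𝓝 (θinf, uinf, vinf))) :
    (∀ (θ' : Fin p → ℝ) (u' v' : Fin N → ℝ),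
      (1 / 2) * ∑ i, (J.mulVec θinf i + uinf i * uinf i - vinf i * vinf i - y i) ^ 2 ≤
      (1 / 2) * ∑ i, (J.mulVec θ' i + u' i * u' i - v' i * v' i - y i) ^ 2) ∧
    (fun i => J.mulVec θinf i + uinf i * uinf i - vinf i * vinf i) = y :=
  stmt_11_general N p J y γ α hγ hα θ u v r hrdef hu' hv' hu0 hv0 θinf uinf vinf hlim
end

section
/- (Closed form of the gradient flow.) Let J ∈ ℝ^{N×p}, y ∈ ℝ^N, γ > 0, α > 0. Suppose (θ_t, u_t, v_t) for t ≥ 0 are differentiable curves satisfying θ'_t = −Jᵀ r_t, u'_t = −2α u_t ⊙ r_t, v'_t = 2α v_t ⊙ r_t, where r_t = Jθ_t + u_t⊙u_t − v_t⊙v_t − y, with initialization θ₀ = 0, u₀ = γ·1, v₀ = γ·1. Define ν_t = −∫₀ᵗ r_τ dτ ∈ ℝ^N. Then for all t ≥ 0: θ_t = Jᵀ ν_t, u_t = γ·exp(2α ν_t) (entrywise exponential), and v_t = γ·exp(−2α ν_t). -/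
/-!
By the fundamental theorem of calculus `ν' = -r`, so the flow equations say that
`θ - Jᵀν`, `u ⊙ exp(-2αν)` and `v ⊙ exp(2αν)` have zero derivative on `[0, t]`;
each is therefore equal to its value at `0`, where `ν₀ = 0`.
-/

open Set Real intervalIntegral Matrix

section

variable {E : Type*} [NormedAddCommGroup E] [NormedSpace ℝ E] {a b : ℝ}

theorem ContinuousOn.hasDerivWithinAt_integral_Icc [CompleteSpace E] {f : ℝ → E}
    (hf : ContinuousOn f (Icc a b)) {x : ℝ} (hx : x ∈ Icc a b) :
    HasDerivWithinAt (fun s => ∫ τ in a..s, f τ) (f x) (Icc a b) x := by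
  have : Fact (x ∈ Icc a b) := ⟨hx⟩
  refine integral_hasDerivWithinAt_right ?_ ?_ (hf x hx)
  · exact (hf.mono (by rw [uIcc_of_le hx.1]; exact Icc_subset_Icc_right hx.2)).intervalIntegrable
  · exact hf.stronglyMeasurableAtFilter_nhdsWithin measurableSet_Icc x

theorem eq_of_hasDerivWithinAt_Icc_eq {f g f' : ℝ → E} (hab : a ≤ b)
    (hf : ∀ x ∈ Icc a b, HasDerivWithinAt f (f' x) (Icc a b) x)
    (hg : ∀ x ∈ Icc a b, HasDerivWithinAt g (f' x) (Icc a b) x) (ha : f a = g a) :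
    f b = g b := by
  have toIci {h : ℝ → E} (hh : ∀ x ∈ Icc a b, HasDerivWithinAt h (f' x) (Icc a b) x) :
      ∀ x ∈ Ico a b, HasDerivWithinAt h (f' x) (Ici x) x := fun x hx =>
    (hh x (Ico_subset_Icc_self hx)).mono_of_mem_nhdsWithin (Icc_mem_nhdsGE_of_mem hx)
  exact eq_of_has_deriv_right_eq (toIci hf) (toIci hg)
    (fun x hx => (hf x hx).continuousWithinAt) (fun x hx => (hg x hx).continuousWithinAt) ha
    b (right_mem_Icc.2 hab)

end

theorem HasDerivWithinAt.matrix_mulVec {m n : Type*} [Fintype m] [Fintype n] (A : Matrix m n ℝ)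
    {f : ℝ → n → ℝ} {f' : n → ℝ} {s : Set ℝ} {x : ℝ} (hf : HasDerivWithinAt f f' s x) :
    HasDerivWithinAt (fun t => A *ᵥ f t) (A *ᵥ f') s x :=
  (Matrix.mulVecLin A).toContinuousLinearMap.hasFDerivAt.comp_hasDerivWithinAt x hf

theorem eq_mul_exp_of_hasDerivWithinAt {w μ ρ : ℝ → ℝ} {k a b : ℝ} (hab : a ≤ b)
    (hw : ∀ x ∈ Icc a b, HasDerivWithinAt w (k * (w x * ρ x)) (Icc a b) x)
    (hμ : ∀ x ∈ Icc a b, HasDerivWithinAt μ (ρ x) (Icc a b) x) :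
    w b = w a * exp (k * (μ b - μ a)) := by
  have hconst : w b * exp (-(k * μ b)) = w a * exp (-(k * μ a)) :=
    eq_of_hasDerivWithinAt_Icc_eq (f := fun x => w x * exp (-(k * μ x))) (f' := 0)
      (g := fun _ => w a * exp (-(k * μ a))) hab
      (fun x hx => ((hw x hx).mul ((hμ x hx).const_mul k).neg.exp).congr_deriv (by simp; ring))
      (fun x _ => hasDerivWithinAt_const x _ _) rfl
  calc w b = w b * exp (-(k * μ b)) * exp (k * μ b) := by rw [mul_assoc, ← exp_add]; simp
    _ = w a * exp (k * (μ b - μ a)) := by rw [hconst, mul_assoc, ← exp_add]; ring_nf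

theorem stmt_12_general (N p : ℕ) (J : Matrix (Fin N) (Fin p) ℝ) (y : Fin N → ℝ)
    (γ α : ℝ)
    (θ : ℝ → Fin p → ℝ) (u v : ℝ → Fin N → ℝ) (r : ℝ → Fin N → ℝ)
    (hrdef : ∀ t : ℝ, r t = fun i =>
      J.mulVec (θ t) i + u t i * u t i - v t i * v t i - y i)
    (hθ' : ∀ t : ℝ, 0 ≤ t → HasDerivAt θ (-(J.transpose.mulVec (r t))) t)
    (hu' : ∀ t : ℝ, 0 ≤ t →
      HasDerivAt u (fun i => -(2 * α) * (u t i * r t i)) t)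
    (hv' : ∀ t : ℝ, 0 ≤ t →
      HasDerivAt v (fun i => (2 * α) * (v t i * r t i)) t)
    (hθ0 : θ 0 = 0) (hu0 : u 0 = fun _ => γ) (hv0 : v 0 = fun _ => γ)
    (ν : ℝ → Fin N → ℝ)
    (hν : ∀ t : ℝ, ν t = fun i => -∫ τ in (0 : ℝ)..t, r τ i) :
    ∀ t : ℝ, 0 ≤ t →
      θ t = J.transpose.mulVec (ν t) ∧
      u t = (fun i => γ * Real.exp (2 * α * ν t i)) ∧
      v t = (fun i => γ * Real.exp (-(2 * α * ν t i))) := by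
  intro t ht
  have hr : ContinuousOn r (Icc 0 t) := fun x hx => by
    have hJθ : ContinuousAt (fun s => J *ᵥ θ s) x :=
      (continuous_const.matrix_mulVec continuous_id).continuousAt.comp (hθ' x hx.1).continuousAt
    have hu := (hu' x hx.1).continuousAt
    have hv := (hv' x hx.1).continuousAt
    rw [show r = fun s => J *ᵥ θ s + u s * u s - v s * v s - y from funext hrdef]
    exact ContinuousAt.continuousWithinAt (by fun_prop)
  have hν0 : ν 0 = 0 := funext fun i => by simp [hν]
  have hνi (i : Fin N) : ∀ x ∈ Icc 0 t, HasDerivWithinAt (fun s => ν s i) (-r x i) (Icc 0 t) x :=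
    fun x hx => by
      simp only [hν]
      exact ((continuous_apply i).comp_continuousOn hr).hasDerivWithinAt_integral_Icc hx |>.neg
  refine ⟨?_, funext fun i => ?_, funext fun i => ?_⟩
  · refine eq_of_hasDerivWithinAt_Icc_eq (g := fun s => Jᵀ *ᵥ ν s) ht
      (fun x hx => (hθ' x hx.1).hasDerivWithinAt) (fun x hx => ?_) (by simp [hθ0, hν0])
    have hνd : HasDerivWithinAt ν (-r x) (Icc 0 t) x := hasDerivWithinAt_pi.2 fun i => hνi i x hx
    simpa only [Matrix.mulVec_neg] using hνd.matrix_mulVec Jᵀ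
  · simpa [hu0, hν0] using eq_mul_exp_of_hasDerivWithinAt (k := 2 * α) ht
      (fun x hx => (hasDerivAt_pi.1 (hu' x hx.1) i).hasDerivWithinAt.congr_deriv (by ring))
      (hνi i)
  · simpa [hv0, hν0] using eq_mul_exp_of_hasDerivWithinAt (k := -(2 * α)) ht
      (fun x hx => (hasDerivAt_pi.1 (hv' x hx.1) i).hasDerivWithinAt.congr_deriv (by ring))
      (hνi i)

/-- Closed form of the gradient flow: if `(θ_t, u_t, v_t)`
follow the gradient flow `θ' = −Jᵀr`, `u' = −2α u⊙r`, `v' = 2α v⊙r` with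
`r = Jθ + u⊙u − v⊙v − y`, initialized at `θ₀ = 0`, `u₀ = v₀ = γ·1`, and
`ν_t = −∫₀ᵗ r_τ dτ` (entrywise), then for all `t ≥ 0`:
`θ_t = Jᵀν_t`, `u_t = γ·exp(2αν_t)`, `v_t = γ·exp(−2αν_t)` entrywise. -/
theorem stmt_12 (N p : ℕ) (J : Matrix (Fin N) (Fin p) ℝ) (y : Fin N → ℝ)
    (γ α : ℝ) (hγ : 0 < γ) (hα : 0 < α)
    (θ : ℝ → Fin p → ℝ) (u v : ℝ → Fin N → ℝ) (r : ℝ → Fin N → ℝ)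
    (hrdef : ∀ t : ℝ, r t = fun i =>
      J.mulVec (θ t) i + u t i * u t i - v t i * v t i - y i)
    (hθ' : ∀ t : ℝ, 0 ≤ t → HasDerivAt θ (-(J.transpose.mulVec (r t))) t)
    (hu' : ∀ t : ℝ, 0 ≤ t →
      HasDerivAt u (fun i => -(2 * α) * (u t i * r t i)) t)
    (hv' : ∀ t : ℝ, 0 ≤ t →
      HasDerivAt v (fun i => (2 * α) * (v t i * r t i)) t)
    (hθ0 : θ 0 = 0) (hu0 : u 0 = fun _ => γ) (hv0 : v 0 = fun _ => γ)
    (ν : ℝ → Fin N → ℝ)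
    (hν : ∀ t : ℝ, ν t = fun i => -∫ τ in (0 : ℝ)..t, r τ i) :
    ∀ t : ℝ, 0 ≤ t →
      θ t = J.transpose.mulVec (ν t) ∧
      u t = (fun i => γ * Real.exp (2 * α * ν t i)) ∧
      v t = (fun i => γ * Real.exp (-(2 * α * ν t i))) :=
  stmt_12_general N p J y γ α θ u v r hrdef hθ' hu' hv' hθ0 hu0 hv0 ν hν
end

section
/- (Limits of over-parameterized sparse variables under the coupling α(γ) = −log γ/(2λ).) Fix λ > 0 and for γ ∈ (0,1) set α(γ) = −log γ/(2λ). Let ν : (0,1) → ℝ be a function and define s(γ) = γ²·exp(4α(γ)ν(γ)) − γ²·exp(−4α(γ)ν(γ)). Suppose lim_{γ→0⁺} s(γ) = c exists and lim_{γ→0⁺} ν(γ) = ν̂ exists. Then: (a) if c > 0 then ν̂ = λ; (b) if c < 0 then ν̂ = −λ; (c) if c = 0 then |ν̂| ≤ λ. -/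
open Filter Topology

/-!
Since `γ² = exp (2 log γ)`, with `t = 2 log γ / λ → -∞` the quantity `s` is
`exp (t (λ - ν)) - exp (t (λ + ν))`. A term `exp (t · x)` tends to `0` when the limit of `x` is
positive and to `+∞` when it is negative. If `ν̂ > λ`, the first term blows up while the second
vanishes, so `s` cannot converge; if `ν̂ < λ`, the first term vanishes and `c` is the limit of a
nonpositive quantity. The symmetry `ν ↦ -ν`, `s ↦ -s` gives the mirrored facts, and the three
cases follow by comparing `c` with `0`.
-/

namespace ExpSubExp

variable {ι : Type*} {l : Filter ι} {t u : ι → ℝ} {a c lam : ℝ}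

lemma tendsto_exp_mul_nhds_zero (ht : Tendsto t l atBot) (hu : Tendsto u l (𝓝 a)) (ha : 0 < a) :
    Tendsto (fun i => Real.exp (t i * u i)) l (𝓝 0) :=
  Real.tendsto_exp_atBot.comp (ht.atBot_mul_pos ha hu)

lemma tendsto_exp_mul_atTop (ht : Tendsto t l atBot) (hu : Tendsto u l (𝓝 a)) (ha : a < 0) :
    Tendsto (fun i => Real.exp (t i * u i)) l atTop :=
  Real.tendsto_exp_atTop.comp (ht.atBot_mul_neg ha hu)

lemma le_and_nonpos_of_tendsto [l.NeBot] (hlam : 0 ≤ lam) (ht : Tendsto t l atBot)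
    (hu : Tendsto u l (𝓝 a))
    (hc : Tendsto (fun i => Real.exp (t i * (lam - u i)) - Real.exp (t i * (lam + u i))) l (𝓝 c)) :
    a ≤ lam ∧ (a < lam → c ≤ 0) := by
  constructor
  · by_contra! hlt
    have hfirst := tendsto_exp_mul_atTop ht (tendsto_const_nhds.sub hu) (sub_neg.mpr hlt)
    have hsecond :=
      tendsto_exp_mul_nhds_zero ht (tendsto_const_nhds.add hu) (by linarith : 0 < lam + a)
    exact not_tendsto_nhds_of_tendsto_atTop (hfirst.atTop_add hsecond.neg) c
      (by simpa only [sub_eq_add_neg] using hc)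
  · intro hlt
    have hfirst := tendsto_exp_mul_nhds_zero ht (tendsto_const_nhds.sub hu) (sub_pos.mpr hlt)
    have hsecond : Tendsto (fun i => Real.exp (t i * (lam + u i))) l (𝓝 (0 - c)) := by
      simpa only [sub_sub_cancel] using hfirst.sub hc
    have := ge_of_tendsto' hsecond fun i => (Real.exp_pos _).le
    linarith

lemma cases_of_tendsto [l.NeBot] (hlam : 0 ≤ lam) (ht : Tendsto t l atBot)
    (hu : Tendsto u l (𝓝 a))
    (hc : Tendsto (fun i => Real.exp (t i * (lam - u i)) - Real.exp (t i * (lam + u i))) l (𝓝 c)) :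
    (0 < c → a = lam) ∧ (c < 0 → a = -lam) ∧ (c = 0 → |a| ≤ lam) := by
  obtain ⟨hle, hnonpos⟩ := le_and_nonpos_of_tendsto hlam ht hu hc
  have hc' : Tendsto (fun i => Real.exp (t i * (lam - -u i)) - Real.exp (t i * (lam + -u i)))
      l (𝓝 (-c)) := by
    simpa only [sub_neg_eq_add, ← sub_eq_add_neg, neg_sub] using hc.neg
  obtain ⟨hge, hnonneg⟩ := le_and_nonpos_of_tendsto hlam ht hu.neg hc'
  refine ⟨fun hc0 => ?_, fun hc0 => ?_, fun _ => abs_le.mpr ⟨by linarith, hle⟩⟩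
  · by_contra hne
    linarith [hnonpos (lt_of_le_of_ne hle hne)]
  · by_contra hne
    have : -a < lam := lt_of_le_of_ne hge fun h => hne (by linarith)
    linarith [hnonneg this]

end ExpSubExp

/-- Limits of over-parameterized sparse variables under the
coupling `α(γ) = −log γ/(2λ)`: with
`s(γ) = γ²·exp(4α(γ)ν(γ)) − γ²·exp(−4α(γ)ν(γ))`, if `s(γ) → c` and
`ν(γ) → ν̂` as `γ → 0⁺` (within `(0,1)`), then `c > 0 → ν̂ = λ`,
`c < 0 → ν̂ = −λ`, and `c = 0 → |ν̂| ≤ λ`. -/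
theorem stmt_13 (lam : ℝ) (hlam : 0 < lam)
    (α : ℝ → ℝ) (hα : ∀ γ ∈ Set.Ioo (0 : ℝ) 1, α γ = -Real.log γ / (2 * lam))
    (ν : ℝ → ℝ) (s : ℝ → ℝ)
    (hs : ∀ γ ∈ Set.Ioo (0 : ℝ) 1, s γ =
      γ ^ 2 * Real.exp (4 * α γ * ν γ) - γ ^ 2 * Real.exp (-(4 * α γ * ν γ)))
    (c νhat : ℝ)
    (hsc : Tendsto s (𝓝[Set.Ioo (0 : ℝ) 1] 0) (𝓝 c))
    (hνc : Tendsto ν (𝓝[Set.Ioo (0 : ℝ) 1] 0) (𝓝 νhat)) :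
    (0 < c → νhat = lam) ∧ (c < 0 → νhat = -lam) ∧ (c = 0 → |νhat| ≤ lam) := by
  have := left_nhdsWithin_Ioo_neBot (zero_lt_one' ℝ)
  have ht : Tendsto (fun γ => 2 * Real.log γ / lam) (𝓝[Set.Ioo (0 : ℝ) 1] 0) atBot :=
    ((Real.tendsto_log_nhdsGT_zero.mono_left (nhdsWithin_mono 0 Set.Ioo_subset_Ioi_self)
      ).const_mul_atBot two_pos).atBot_div_const hlam
  have hs_eq : s =ᶠ[𝓝[Set.Ioo (0 : ℝ) 1] 0] fun γ =>
      Real.exp (2 * Real.log γ / lam * (lam - ν γ)) -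
        Real.exp (2 * Real.log γ / lam * (lam + ν γ)) := by
    filter_upwards [self_mem_nhdsWithin] with γ hγ
    have hsq : γ ^ 2 = Real.exp (2 * Real.log γ) := by
      rw [← Real.exp_log (pow_pos hγ.1 2), Real.log_pow, Nat.cast_ofNat]
    rw [hs γ hγ, hα γ hγ, hsq, ← Real.exp_add, ← Real.exp_add]
    congr 2 <;> field_simp <;> ring
  exact ExpSubExp.cases_of_tendsto hlam.le ht hνc (hsc.congr' hs_eq)
end

section
/- (Implicit ℓ₁ regularization of the gradient flow limit.) Let J ∈ ℝ^{N×p}, y ∈ ℝ^N, and λ > 0, and for γ ∈ (0,1) set α(γ) = −log γ/(2λ). Suppose for each γ ∈ (0,1) there exists ν(γ) ∈ ℝ^N such that, with θ(γ) = Jᵀν(γ), u(γ) = γ·exp(2α(γ)ν(γ)), v(γ) = γ·exp(−2α(γ)ν(γ)) (entrywise exponentials), and s(γ) = u(γ)⊙u(γ) − v(γ)⊙v(γ), one has Jθ(γ) + s(γ) = y. Suppose moreover that the limits θ̂ = lim_{γ→0⁺} θ(γ), ŝ = lim_{γ→0⁺} s(γ), and ν̂ = lim_{γ→0⁺} ν(γ)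 exist. Then (θ̂, ŝ) is an optimal solution to the convex program: minimize (1/2)‖θ‖₂² + λ‖s‖₁ over (θ, s) subject to y = Jθ + s. -/
open Filter Topology

private lemma mynebot : (𝓝[Set.Ioo (0:ℝ) 1] (0:ℝ)).NeBot := by
  apply mem_closure_iff_nhdsWithin_neBot.mp
  rw [closure_Ioo (by norm_num : (0:ℝ) ≠ 1)]
  constructor <;> norm_num

private lemma tendsto_mulVecAux {k m : ℕ} (A : Matrix (Fin k) (Fin m) ℝ) {F : Filter ℝ}
    {x : ℝ → Fin m → ℝ} {xh : Fin m → ℝ} (hx : Tendsto x F (𝓝 xh)) :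
    Tendsto (fun γ => A.mulVec (x γ)) F (𝓝 (A.mulVec xh)) := by
  rw [tendsto_pi_nhds] at hx ⊢
  intro i
  simp only [Matrix.mulVec, dotProduct]
  exact tendsto_finset_sum _ fun j _ => tendsto_const_nhds.mul (hx j)

/-- upper bound on limit of ν -/
private lemma aux1 {lam : ℝ} (hlam : 0 < lam) {n f : ℝ → ℝ} {nh L : ℝ}
    (hrep : ∀ γ ∈ Set.Ioo (0:ℝ) 1, f γ = γ ^ (2 - 2 * n γ / lam) - γ ^ (2 + 2 * n γ / lam))
    (hn : Tendsto n (𝓝[Set.Ioo (0:ℝ) 1] 0) (𝓝 nh))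
    (hf : Tendsto f (𝓝[Set.Ioo (0:ℝ) 1] 0) (𝓝 L)) :
    nh ≤ lam := by
  haveI := mynebot
  by_contra hcon
  push_neg at hcon
  set c := (lam + nh) / 2 with hc
  have hc1 : lam < c := by rw [hc]; linarith
  have hc2 : c < nh := by rw [hc]; linarith
  set δ := 2 * c / lam - 2 with hδ
  have hδpos : 0 < δ := by
    rw [hδ, sub_pos, lt_div_iff₀ hlam]; linarith
  set C := |L| + 2 with hC
  have hCpos : (0:ℝ) < C := by positivity
  have hev1 : ∀ᶠ γ in 𝓝[Set.Ioo (0:ℝ) 1] 0, γ ∈ Set.Ioo (0:ℝ) 1 := eventually_mem_nhdsWithin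
  have hev2 : ∀ᶠ γ in 𝓝[Set.Ioo (0:ℝ) 1] 0, c < n γ := hn.eventually (eventually_gt_nhds hc2)
  have hev3 : ∀ᶠ γ in 𝓝[Set.Ioo (0:ℝ) 1] 0, f γ < L + 1 :=
    hf.eventually (eventually_lt_nhds (by linarith))
  have hev4 : ∀ᶠ γ in 𝓝[Set.Ioo (0:ℝ) 1] 0, γ < C ^ (-(1/δ)) :=
    (eventually_lt_nhds (by positivity : (0:ℝ) < C ^ (-(1/δ)))).filter_mono nhdsWithin_le_nhds
  obtain ⟨γ, hγ, hcγ, hfγ, hγC⟩ := (hev1.and (hev2.and (hev3.and hev4))).exists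
  have hγ0 := hγ.1
  have hγ1 := hγ.2
  -- exponent bound
  have h1 : 2 - 2 * n γ / lam ≤ -δ := by
    rw [hδ, neg_sub]
    have : 2 * c / lam ≤ 2 * n γ / lam := by gcongr
    linarith
  have key1 : γ ^ (-δ) ≤ γ ^ (2 - 2 * n γ / lam) :=
    Real.rpow_le_rpow_of_exponent_ge hγ0 hγ1.le h1
  have hnγpos : 0 < n γ := lt_trans (lt_trans hlam hc1) hcγ
  have key2 : γ ^ (2 + 2 * n γ / lam) ≤ 1 :=
    Real.rpow_le_one hγ0.le hγ1.le (by positivity)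
  have hlow : γ ^ (-δ) - 1 ≤ f γ := by
    rw [hrep γ hγ]; linarith
  have hup : γ ^ (-δ) < C := by
    have : L + 1 ≤ C - 1 := by rw [hC]; have := le_abs_self L; linarith
    linarith
  -- but γ < C^(-(1/δ)) gives γ^(-δ) > C
  have hbig : C < γ ^ (-δ) := by
    have h2 : (C ^ (-(1/δ))) ^ (-δ) < γ ^ (-δ) :=
      Real.rpow_lt_rpow_of_neg hγ0 hγC (by linarith)
    have h3 : (C ^ (-(1/δ))) ^ (-δ) = C := by
      rw [← Real.rpow_mul hCpos.le]
      rw [show (-(1/δ)) * (-δ) = 1 by field_simp]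
      exact Real.rpow_one C
    linarith [h3 ▸ h2]
  linarith

/-- if limit of f is positive, limit of n equals lam (lower bound part) -/
private lemma aux2 {lam : ℝ} (hlam : 0 < lam) {n f : ℝ → ℝ} {nh L : ℝ}
    (hrep : ∀ γ ∈ Set.Ioo (0:ℝ) 1, f γ = γ ^ (2 - 2 * n γ / lam) - γ ^ (2 + 2 * n γ / lam))
    (hn : Tendsto n (𝓝[Set.Ioo (0:ℝ) 1] 0) (𝓝 nh))
    (hf : Tendsto f (𝓝[Set.Ioo (0:ℝ) 1] 0) (𝓝 L)) (hL : 0 < L) :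
    lam ≤ nh := by
  haveI := mynebot
  by_contra hcon
  push_neg at hcon
  set c := (lam + nh) / 2 with hc
  have hc1 : nh < c := by rw [hc]; linarith
  have hc2 : c < lam := by rw [hc]; linarith
  set δ := 2 - 2 * c / lam with hδ
  have hδpos : 0 < δ := by
    rw [hδ, sub_pos, div_lt_iff₀ hlam]; linarith
  have hev1 : ∀ᶠ γ in 𝓝[Set.Ioo (0:ℝ) 1] 0, γ ∈ Set.Ioo (0:ℝ) 1 := eventually_mem_nhdsWithin
  have hev2 : ∀ᶠ γ in 𝓝[Set.Ioo (0:ℝ) 1] 0, n γ < c := hn.eventually (eventually_lt_nhds hc1)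
  have hev3 : ∀ᶠ γ in 𝓝[Set.Ioo (0:ℝ) 1] 0, L / 2 < f γ :=
    hf.eventually (eventually_gt_nhds (by linarith))
  have hev4 : ∀ᶠ γ in 𝓝[Set.Ioo (0:ℝ) 1] 0, γ < (L/2) ^ ((1:ℝ)/δ) :=
    (eventually_lt_nhds (by positivity : (0:ℝ) < (L/2) ^ ((1:ℝ)/δ))).filter_mono nhdsWithin_le_nhds
  obtain ⟨γ, hγ, hcγ, hfγ, hγL⟩ := (hev1.and (hev2.and (hev3.and hev4))).exists
  have hγ0 := hγ.1
  have hγ1 := hγ.2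
  have h1 : δ ≤ 2 - 2 * n γ / lam := by
    rw [hδ]
    have : 2 * n γ / lam ≤ 2 * c / lam := by gcongr
    linarith
  have key1 : γ ^ (2 - 2 * n γ / lam) ≤ γ ^ δ :=
    Real.rpow_le_rpow_of_exponent_ge hγ0 hγ1.le h1
  have key2 : 0 ≤ γ ^ (2 + 2 * n γ / lam) := Real.rpow_nonneg hγ0.le _
  have hup : f γ ≤ γ ^ δ := by rw [hrep γ hγ]; linarith
  have hsm : γ ^ δ < L / 2 := by
    have h2 : γ ^ δ < ((L/2) ^ ((1:ℝ)/δ)) ^ δ := Real.rpow_lt_rpow hγ0.le hγL hδpos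
    have h3 : ((L/2) ^ ((1:ℝ)/δ)) ^ δ = L / 2 := by
      rw [← Real.rpow_mul (by positivity), show (1:ℝ)/δ * δ = 1 by field_simp, Real.rpow_one]
    linarith [h3 ▸ h2]
  linarith

private lemma auxrep {γ lam m : ℝ} (hγ : 0 < γ) (hlam : 0 < lam) :
    γ * Real.exp (2 * (-Real.log γ / (2*lam)) * m) * (γ * Real.exp (2 * (-Real.log γ / (2*lam)) * m))
      - γ * Real.exp (-(2 * (-Real.log γ / (2*lam)) * m)) * (γ * Real.exp (-(2 * (-Real.log γ / (2*lam)) * m)))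
    = γ ^ (2 - 2*m/lam) - γ ^ (2 + 2*m/lam) := by
  have hmul : ∀ x : ℝ, γ * Real.exp x * (γ * Real.exp x) = Real.exp (2 * Real.log γ + 2 * x) := by
    intro x
    rw [show 2*Real.log γ + 2*x = (Real.log γ + x) + (Real.log γ + x) by ring,
      Real.exp_add, Real.exp_add, Real.exp_log hγ]
  rw [Real.rpow_def_of_pos hγ, Real.rpow_def_of_pos hγ, hmul, hmul]
  congr 1 <;> rw [Real.exp_eq_exp] <;> field_simp <;> ring

/-- Implicit ℓ₁ regularization of the gradient flow limit:
with `α(γ) = −log γ/(2λ)`, if for each `γ ∈ (0,1)` there is `ν(γ)` such that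
`θ(γ) = Jᵀν(γ)`, `u(γ) = γ·exp(2α(γ)ν(γ))`, `v(γ) = γ·exp(−2α(γ)ν(γ))`,
`s(γ) = u(γ)⊙u(γ) − v(γ)⊙v(γ)` satisfy `Jθ(γ) + s(γ) = y`, and the limits
`θ̂, ŝ, ν̂` as `γ → 0⁺` exist, then `(θ̂, ŝ)` is optimal for
`min (1/2)‖θ‖₂² + λ‖s‖₁ s.t. y = Jθ + s`. -/
theorem stmt_14 (N p : ℕ) (J : Matrix (Fin N) (Fin p) ℝ) (y : Fin N → ℝ)
    (lam : ℝ) (hlam : 0 < lam)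
    (α : ℝ → ℝ) (hα : ∀ γ ∈ Set.Ioo (0 : ℝ) 1, α γ = -Real.log γ / (2 * lam))
    (ν : ℝ → Fin N → ℝ) (θ : ℝ → Fin p → ℝ) (u v s : ℝ → Fin N → ℝ)
    (hθ : ∀ γ ∈ Set.Ioo (0 : ℝ) 1, θ γ = J.transpose.mulVec (ν γ))
    (hu : ∀ γ ∈ Set.Ioo (0 : ℝ) 1, u γ = fun i => γ * Real.exp (2 * α γ * ν γ i))
    (hv : ∀ γ ∈ Set.Ioo (0 : ℝ) 1, v γ = fun i => γ * Real.exp (-(2 * α γ * ν γ i)))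
    (hs : ∀ γ ∈ Set.Ioo (0 : ℝ) 1, s γ = fun i => u γ i * u γ i - v γ i * v γ i)
    (hfeas : ∀ γ ∈ Set.Ioo (0 : ℝ) 1, J.mulVec (θ γ) + s γ = y)
    (θhat : Fin p → ℝ) (shat νhat : Fin N → ℝ)
    (hθlim : Tendsto θ (𝓝[Set.Ioo (0 : ℝ) 1] 0) (𝓝 θhat))
    (hslim : Tendsto s (𝓝[Set.Ioo (0 : ℝ) 1] 0) (𝓝 shat))
    (hνlim : Tendsto ν (𝓝[Set.Ioo (0 : ℝ) 1] 0) (𝓝 νhat)) :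
    y = J.mulVec θhat + shat ∧
    ∀ (θ' : Fin p → ℝ) (s' : Fin N → ℝ), y = J.mulVec θ' + s' →
      (1 / 2) * ∑ j, (θhat j) ^ 2 + lam * ∑ i, |shat i| ≤
      (1 / 2) * ∑ j, (θ' j) ^ 2 + lam * ∑ i, |s' i| := by
  haveI := mynebot
  -- θhat = Jᵀ νhat
  have hθhat : θhat = J.transpose.mulVec νhat :=
    tendsto_nhds_unique hθlim
      (Filter.Tendsto.congr'
        (eventually_mem_nhdsWithin.mono fun γ hγ => (hθ γ hγ).symm)
        (tendsto_mulVecAux J.transpose hνlim))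
  -- feasibility in the limit
  have hfeashat : y = J.mulVec θhat + shat := by
    have h1 : Tendsto (fun γ => J.mulVec (θ γ) + s γ) (𝓝[Set.Ioo (0:ℝ) 1] 0)
        (𝓝 (J.mulVec θhat + shat)) := (tendsto_mulVecAux J hθlim).add hslim
    have h2 : Tendsto (fun γ => J.mulVec (θ γ) + s γ) (𝓝[Set.Ioo (0:ℝ) 1] 0) (𝓝 y) :=
      Filter.Tendsto.congr' (eventually_mem_nhdsWithin.mono fun γ hγ => (hfeas γ hγ).symm)
        tendsto_const_nhds
    exact tendsto_nhds_unique h2 h1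
  -- pointwise representation
  have hrep : ∀ i, ∀ γ ∈ Set.Ioo (0:ℝ) 1,
      s γ i = γ ^ (2 - 2 * ν γ i / lam) - γ ^ (2 + 2 * ν γ i / lam) := by
    intro i γ hγ
    simp only [hs γ hγ, hu γ hγ, hv γ hγ, hα γ hγ]
    exact auxrep hγ.1 hlam
  have hrep' : ∀ i, ∀ γ ∈ Set.Ioo (0:ℝ) 1,
      -(s γ i) = γ ^ (2 - 2 * (-(ν γ i)) / lam) - γ ^ (2 + 2 * (-(ν γ i)) / lam) := by
    intro i γ hγ
    rw [hrep i γ hγ, show 2 - 2 * (-(ν γ i)) / lam = 2 + 2 * ν γ i / lam by ring,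
      show 2 + 2 * (-(ν γ i)) / lam = 2 - 2 * ν γ i / lam by ring]
    ring
  have hνi : ∀ i, Tendsto (fun γ => ν γ i) (𝓝[Set.Ioo (0:ℝ) 1] 0) (𝓝 (νhat i)) :=
    fun i => tendsto_pi_nhds.mp hνlim i
  have hsi : ∀ i, Tendsto (fun γ => s γ i) (𝓝[Set.Ioo (0:ℝ) 1] 0) (𝓝 (shat i)) :=
    fun i => tendsto_pi_nhds.mp hslim i
  have habs : ∀ i, |νhat i| ≤ lam := by
    intro i
    rw [abs_le]
    constructor
    · have := aux1 hlam (hrep' i) (hνi i).neg (hsi i).neg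
      linarith
    · exact aux1 hlam (hrep i) (hνi i) (hsi i)
  have hsign : ∀ i, νhat i * shat i = lam * |shat i| := by
    intro i
    rcases lt_trichotomy (shat i) 0 with h | h | h
    · have h1 : lam ≤ -νhat i :=
        aux2 hlam (hrep' i) (hνi i).neg (hsi i).neg (by linarith : (0:ℝ) < -(shat i))
      have h2 : -(νhat i) ≤ lam := by
        have := (abs_le.mp (habs i)).1; linarith
      have h3 : νhat i = -lam := by linarith
      rw [h3, abs_of_neg h]; ring
    · rw [h]; simp
    · have h1 : lam ≤ νhat i := aux2 hlam (hrep i) (hνi i) (hsi i) h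
      have h2 : νhat i ≤ lam := (abs_le.mp (habs i)).2
      have h3 : νhat i = lam := le_antisymm h2 h1
      rw [h3, abs_of_pos h]
  refine ⟨hfeashat, ?_⟩
  intro θ' s' hfeas'
  have hyy : ∀ i, J.mulVec θ' i - J.mulVec θhat i = shat i - s' i := by
    intro i
    have h1 := congrFun hfeas' i
    have h2 := congrFun hfeashat i
    simp only [Pi.add_apply] at h1 h2
    linarith
  have hdot : ∑ j, θhat j * (θ' j - θhat j) = ∑ i, νhat i * (shat i - s' i) := by
    calc ∑ j, θhat j * (θ' j - θhat j)
        = ∑ j, ∑ i, νhat i * (J i j * (θ' j - θhat j)) := by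
          apply Finset.sum_congr rfl; intro j _
          rw [hθhat]
          simp only [Matrix.mulVec, dotProduct, Matrix.transpose_apply]
          rw [Finset.sum_mul]
          apply Finset.sum_congr rfl; intro i _; ring
      _ = ∑ i, ∑ j, νhat i * (J i j * (θ' j - θhat j)) := Finset.sum_comm
      _ = ∑ i, νhat i * (J.mulVec θ' i - J.mulVec θhat i) := by
          apply Finset.sum_congr rfl; intro i _
          rw [← Finset.mul_sum]
          congr 1
          simp only [Matrix.mulVec, dotProduct, mul_sub, ← Finset.sum_sub_distrib]
      _ = ∑ i, νhat i * (shat i - s' i) := by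
          apply Finset.sum_congr rfl; intro i _; rw [hyy i]
  have h1 : ∑ j, θhat j * (θ' j - θhat j) ≤
      (1/2) * ∑ j, (θ' j)^2 - (1/2) * ∑ j, (θhat j)^2 := by
    have hb : ∀ j ∈ Finset.univ, θhat j * (θ' j - θhat j) ≤ (1/2) * (θ' j)^2 - (1/2) * (θhat j)^2 :=
      fun j _ => by nlinarith [sq_nonneg (θ' j - θhat j)]
    calc ∑ j, θhat j * (θ' j - θhat j)
        ≤ ∑ j, ((1/2) * (θ' j)^2 - (1/2) * (θhat j)^2) := Finset.sum_le_sum hb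
      _ = (1/2) * ∑ j, (θ' j)^2 - (1/2) * ∑ j, (θhat j)^2 := by
          rw [Finset.sum_sub_distrib, Finset.mul_sum, Finset.mul_sum]
  have h2 : ∑ i, νhat i * shat i = lam * ∑ i, |shat i| := by
    rw [Finset.mul_sum]; exact Finset.sum_congr rfl fun i _ => hsign i
  have h3 : ∑ i, νhat i * s' i ≤ lam * ∑ i, |s' i| := by
    rw [Finset.mul_sum]
    apply Finset.sum_le_sum
    intro i _
    calc νhat i * s' i ≤ |νhat i * s' i| := le_abs_self _
      _ = |νhat i| * |s' i| := abs_mul _ _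
      _ ≤ lam * |s' i| := mul_le_mul_of_nonneg_right (habs i) (abs_nonneg _)
  have hsplit : ∑ i, νhat i * (shat i - s' i) =
      ∑ i, νhat i * shat i - ∑ i, νhat i * s' i := by
    rw [← Finset.sum_sub_distrib]
    apply Finset.sum_congr rfl; intro i _; ring
  linarith
end

section
/- (Main result, precise form.) Let J ∈ ℝ^{N×p} have rank r and coherence μ(J), let s⋆ ∈ ℝ^N have exactly k nonzero entries with k²r < N/(4μ(J)), set y = Jθ⋆ + s⋆ where θ⋆ = VΣ⁻¹Uᵀ(y − s⋆) for the compact SVD J = UΣVᵀ. Then there exists λ₀ > 0 depending only on (J, θ⋆, k) such that the following holds for every λ > λ₀: with α(γ) = −log γ/(2λ) for γ ∈ (0,1), suppose for each γ there exists ν(γ) ∈ ℝ^N such that, setting θ(γ) = Jᵀν(γ) and s(γ) = γ²exp(4α(γ)ν(γ)) − γ²exp(−4α(γ)ν(γ)) entrywise, one has Jθ(γ) + s(γ) = y, and suppose the limits θ̂ = lim_{γ→0⁺} θ(γ), ŝ = lim_{γ→0⁺} s(γ), ν̂ = lim_{γ→0⁺} ν(γ) exist. Then θ̂ = θ⋆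 and ŝ = s⋆. -/
/-! Coordinatewise, `s i γ = γ ^ (2 (1 - ν i γ / λ)) - γ ^ (2 (1 + ν i γ / λ))`. If the limit
`ν̂ i` exceeded `λ` in absolute value, one of the two powers would blow up as `γ → 0⁺`, and if
`|ν̂ i| < λ` both would vanish; hence `|ν̂ i| ≤ λ` and `ν̂ i * ŝ i = λ |ŝ i|`, i.e.
`ν̂ ∈ λ ∂‖·‖₁ (ŝ)`. Passing to the limit in the constraints gives `θ̂ = Jᵀ ν̂` and `J θ̂ + ŝ = y`.

Incoherence supplies a dual certificate `w ∈ λ ∂‖·‖₁ (s⋆)` with `Jᵀ w = θ⋆` as soon as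
`λ ≥ 2 ‖w₀‖∞`, where `w₀ = U Σ⁻¹ Vᵀ θ⋆`: take `w = w₀ + z` with `Uᵀ z = 0`, `z` prescribed on the
support `S` of `s⋆` and at most a third of the prescribed size off `S`. This is possible because
`U Uᵀ` compressed to `S` has sup-norm operator norm at most `|S| max_i ‖Uᵀ e_i‖² ≤ 1/4`.

Monotonicity of the subdifferential of `‖·‖₁` then gives
`0 ≤ ⟪ν̂ - w, ŝ - s⋆⟫ = ⟪ν̂ - w, J (θ⋆ - θ̂)⟫ = -‖θ̂ - θ⋆‖²`. -/

open Filter Topology Matrix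

section

open Real

lemma le_and_nonpos_of_tendsto_exp_sub_exp {α : Type*} {l : Filter α} [l.NeBot]
    {L c q : α → ℝ} {a b lam : ℝ} (hlam : 0 < lam) (hL : Tendsto L l atBot)
    (hc : Tendsto c l (𝓝 a)) (hq : Tendsto q l (𝓝 b))
    (hqe : ∀ᶠ x in l, q x = exp (L x * (1 - c x / lam)) - exp (L x * (1 + c x / lam))) :
    a ≤ lam ∧ (a < lam → b ≤ 0) := by
  have hL0 : ∀ᶠ x in l, L x ≤ 0 := hL.eventually_le_atBot 0
  constructor
  · by_contra! ha
    obtain ⟨m, hlm, hma⟩ := exists_between ha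
    have hm : 1 - m / lam < 0 := by rw [sub_neg, one_lt_div hlam]; exact hlm
    have hcm : ∀ᶠ x in l, m < c x := hc.eventually (eventually_gt_nhds hma)
    have hlow : ∀ᶠ x in l, exp (L x * (1 - m / lam)) - 1 ≤ q x := by
      filter_upwards [hqe, hL0, hcm] with x hqx hLx hcx
      have hcx' : m / lam < c x / lam := div_lt_div_of_pos_right hcx hlam
      have hm0 : 0 ≤ m / lam := div_nonneg (by linarith) hlam.le
      rw [hqx]
      refine sub_le_sub (exp_le_exp.mpr (mul_le_mul_of_nonpos_left (by linarith) hLx)) ?_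
      exact exp_le_one_iff.mpr (mul_nonpos_of_nonpos_of_nonneg hLx (by linarith))
    have htop : Tendsto (fun x => exp (L x * (1 - m / lam)) - 1) l atTop :=
      tendsto_atTop_add_const_right _ _ (tendsto_exp_atTop.comp (hL.atBot_mul_const_of_neg hm))
    exact not_tendsto_atTop_of_tendsto_nhds hq (tendsto_atTop_mono' l hlow htop)
  · intro ha
    obtain ⟨m, ham, hml⟩ := exists_between ha
    have hm : 0 < 1 - m / lam := by rw [sub_pos, div_lt_one hlam]; exact hml
    have hcm : ∀ᶠ x in l, c x < m := hc.eventually (eventually_lt_nhds ham)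
    have hup : ∀ᶠ x in l, q x ≤ exp (L x * (1 - m / lam)) := by
      filter_upwards [hqe, hL0, hcm] with x hqx hLx hcx
      have hcx' : c x / lam < m / lam := div_lt_div_of_pos_right hcx hlam
      rw [hqx, sub_le_iff_le_add]
      refine le_add_of_le_of_nonneg ?_ (exp_pos _).le
      exact exp_le_exp.mpr (mul_le_mul_of_nonpos_left (by linarith) hLx)
    exact le_of_tendsto_of_tendsto hq (tendsto_exp_atBot.comp (hL.atBot_mul_const hm)) hup

lemma abs_le_and_mul_eq_of_tendsto_exp_sub_exp {α : Type*} {l : Filter α} [l.NeBot]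
    {L c q : α → ℝ} {a b lam : ℝ} (hlam : 0 < lam) (hL : Tendsto L l atBot)
    (hc : Tendsto c l (𝓝 a)) (hq : Tendsto q l (𝓝 b))
    (hqe : ∀ᶠ x in l, q x = exp (L x * (1 - c x / lam)) - exp (L x * (1 + c x / lam))) :
    |a| ≤ lam ∧ a * b = lam * |b| := by
  obtain ⟨hle, hpos⟩ := le_and_nonpos_of_tendsto_exp_sub_exp hlam hL hc hq hqe
  have hqe' : ∀ᶠ x in l, -q x =
      exp (L x * (1 - -c x / lam)) - exp (L x * (1 + -c x / lam)) := by
    filter_upwards [hqe] with x hx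
    rw [hx, neg_div, sub_neg_eq_add, ← sub_eq_add_neg, neg_sub]
  obtain ⟨hge, hneg⟩ := le_and_nonpos_of_tendsto_exp_sub_exp hlam hL hc.neg hq.neg hqe'
  refine ⟨abs_le.mpr ⟨by linarith, hle⟩, ?_⟩
  rcases lt_trichotomy b 0 with hb | rfl | hb
  · have ha : a = -lam := by by_contra h; linarith [hneg (by contrapose! h; linarith)]
    rw [abs_of_neg hb, ha]
    ring
  · simp
  · have ha : a = lam := by by_contra h; linarith [hpos (lt_of_le_of_ne hle h)]
    rw [abs_of_pos hb, ha]

def IsL1Subgradient {ι : Type*} (lam : ℝ) (ν s : ι → ℝ) : Prop :=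
  ∀ i, |ν i| ≤ lam ∧ ν i * s i = lam * |s i|

lemma isL1Subgradient_of_tendsto {α ι : Type*} {l : Filter α} [l.NeBot] {lam : ℝ}
    {L : α → ℝ} {ν s : α → ι → ℝ} {νhat shat : ι → ℝ} (hlam : 0 < lam)
    (hL : Tendsto L l atBot) (hν : Tendsto ν l (𝓝 νhat)) (hs : Tendsto s l (𝓝 shat))
    (hνs : ∀ᶠ x in l, ∀ i,
      s x i = exp (L x * (1 - ν x i / lam)) - exp (L x * (1 + ν x i / lam))) :
    IsL1Subgradient lam νhat shat := fun i =>
  abs_le_and_mul_eq_of_tendsto_exp_sub_exp hlam hL (tendsto_pi_nhds.mp hν i)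
    (tendsto_pi_nhds.mp hs i) (hνs.mono fun _ h => h i)

lemma sq_mul_exp_eq_exp_log_mul {γ : ℝ} (hγ : 0 < γ) (lam x : ℝ) :
    γ ^ 2 * exp (4 * (-log γ / (2 * lam)) * x) = exp (2 * log γ * (1 - x / lam)) := by
  rw [← exp_log (pow_pos hγ 2), log_pow, ← exp_add]
  congr 1
  push_cast
  ring

lemma isL1Subgradient_of_tendsto_flow {ι : Type*} {lam : ℝ} (hlam : 0 < lam) {α : ℝ → ℝ}
    {ν s : ℝ → ι → ℝ} {νhat shat : ι → ℝ}
    (hα : ∀ γ ∈ Set.Ioo (0 : ℝ) 1, α γ = -log γ / (2 * lam))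
    (hs : ∀ γ ∈ Set.Ioo (0 : ℝ) 1, s γ = fun i =>
      γ ^ 2 * exp (4 * α γ * ν γ i) - γ ^ 2 * exp (-(4 * α γ * ν γ i)))
    (hνt : Tendsto ν (𝓝[Set.Ioo (0 : ℝ) 1] 0) (𝓝 νhat))
    (hst : Tendsto s (𝓝[Set.Ioo (0 : ℝ) 1] 0) (𝓝 shat)) :
    IsL1Subgradient lam νhat shat := by
  have : (𝓝[Set.Ioo (0 : ℝ) 1] 0).NeBot := left_nhdsWithin_Ioo_neBot one_pos
  refine isL1Subgradient_of_tendsto (L := fun γ => 2 * log γ) hlam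
    ((tendsto_log_nhdsGT_zero.mono_left (nhdsWithin_mono _ Set.Ioo_subset_Ioi_self)).const_mul_atBot
      two_pos) hνt hst (eventually_nhdsWithin_of_forall fun γ hγ i => ?_)
  simp only [hs γ hγ, hα γ hγ]
  rw [← mul_neg, sq_mul_exp_eq_exp_log_mul hγ.1, sq_mul_exp_eq_exp_log_mul hγ.1, neg_div,
    sub_neg_eq_add]

end

lemma sub_mul_sub_nonneg_of_abs_le_of_mul_eq {lam ν w s t : ℝ} (hν : |ν| ≤ lam)
    (hνs : ν * s = lam * |s|) (hw : |w| ≤ lam) (hwt : w * t = lam * |t|) :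
    0 ≤ (ν - w) * (s - t) := by
  have hνt : ν * t ≤ lam * |t| :=
    (le_abs_self _).trans ((abs_mul ν t).trans_le (mul_le_mul_of_nonneg_right hν (abs_nonneg t)))
  have hws : w * s ≤ lam * |s| :=
    (le_abs_self _).trans ((abs_mul w s).trans_le (mul_le_mul_of_nonneg_right hw (abs_nonneg s)))
  nlinarith

lemma IsL1Subgradient.dotProduct_sub_nonneg {ι : Type*} [Fintype ι] {lam : ℝ} {ν w s t : ι → ℝ}
    (hν : IsL1Subgradient lam ν s) (hw : IsL1Subgradient lam w t) :
    0 ≤ (ν - w) ⬝ᵥ (s - t) :=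
  Finset.sum_nonneg fun i _ =>
    sub_mul_sub_nonneg_of_abs_le_of_mul_eq (hν i).1 (hν i).2 (hw i).1 (hw i).2

lemma eq_of_isL1Subgradient {m n : Type*} [Fintype m] [Fintype n] {J : Matrix m n ℝ}
    {lam : ℝ} {θ θ' : n → ℝ} {s s' ν w : m → ℝ} (hfit : J *ᵥ θ + s = J *ᵥ θ' + s')
    (hθ : θ = Jᵀ *ᵥ ν) (hθ' : θ' = Jᵀ *ᵥ w)
    (hν : IsL1Subgradient lam ν s) (hw : IsL1Subgradient lam w s') : θ = θ' ∧ s = s' := by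
  have hs : s - s' = J *ᵥ (θ' - θ) := by
    rw [mulVec_sub]; linear_combination hfit
  have hmono := hν.dotProduct_sub_nonneg hw
  rw [hs, dotProduct_mulVec, ← mulVec_transpose, mulVec_sub, ← hθ, ← hθ', ← neg_sub,
    neg_dotProduct, neg_nonneg] at hmono
  have hθθ' : θ' - θ = 0 :=
    dotProduct_self_eq_zero.mp (le_antisymm hmono (Finset.sum_nonneg fun i _ => mul_self_nonneg _))
  obtain rfl : θ' = θ := sub_eq_zero.mp hθθ'
  exact ⟨rfl, add_left_cancel hfit⟩

lemma abs_mul_transpose_apply_le {ι κ : Type*} [Fintype κ] {U : Matrix ι κ ℝ} {g : ℝ}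
    (hrow : ∀ i, ∑ j, U i j ^ 2 ≤ g) (i i' : ι) : |(U * Uᵀ) i i'| ≤ g := by
  have hg : 0 ≤ g := (Finset.sum_nonneg fun j _ => sq_nonneg (U i j)).trans (hrow i)
  refine abs_le_of_sq_le_sq ?_ hg
  calc (U * Uᵀ) i i' ^ 2 ≤ (∑ j, U i j ^ 2) * ∑ j, U i' j ^ 2 :=
        Finset.sum_mul_sq_le_sq_mul_sq _ _ _
    _ ≤ g ^ 2 := by
        rw [sq]
        exact mul_le_mul (hrow i) (hrow i') (Finset.sum_nonneg fun j _ => sq_nonneg _) hg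

lemma norm_mulVec_le_of_sum_abs_le {m n : Type*} [Fintype m] [Fintype n] {A : Matrix m n ℝ}
    {c : ℝ} (hc : 0 ≤ c) (hA : ∀ i, ∑ j, |A i j| ≤ c) (v : n → ℝ) :
    ‖A *ᵥ v‖ ≤ c * ‖v‖ := by
  refine (pi_norm_le_iff_of_nonneg (by positivity)).mpr fun i => ?_
  calc ‖(A *ᵥ v) i‖ ≤ ∑ j, |A i j| * ‖v‖ := by
        refine (Finset.abs_sum_le_sum_abs _ _).trans (Finset.sum_le_sum fun j _ => ?_)
        rw [abs_mul]
        exact mul_le_mul_of_nonneg_left (norm_le_pi_norm v j) (abs_nonneg _)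
    _ ≤ c * ‖v‖ := by
        rw [← Finset.sum_mul]
        exact mul_le_mul_of_nonneg_right (hA i) (norm_nonneg v)

lemma exists_sub_mulVec_eq_of_norm_mulVec_le {ι : Type*} [Fintype ι] [DecidableEq ι]
    {A : Matrix ι ι ℝ} {q : ℝ} (hq : q < 1) (hA : ∀ v, ‖A *ᵥ v‖ ≤ q * ‖v‖) (c : ι → ℝ) :
    ∃ a, a - A *ᵥ a = c ∧ ‖a‖ ≤ ‖c‖ / (1 - q) := by
  have hsub : ∀ x, (1 - A) *ᵥ x = x - A *ᵥ x := fun x => by rw [sub_mulVec, one_mulVec]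
  have hinj : Function.Injective (1 - A).mulVec := by
    intro v v' h
    have hd : v - v' = A *ᵥ (v - v') := by
      rw [← sub_eq_zero, ← hsub, mulVec_sub, h, sub_self]
    have hnorm : ‖v - v'‖ ≤ q * ‖v - v'‖ := (congrArg norm hd).trans_le (hA _)
    exact sub_eq_zero.mp (norm_le_zero_iff.mp (by nlinarith [norm_nonneg (v - v')]))
  have hunit := isUnit_iff_isUnit_det _ |>.mp (mulVec_injective_iff_isUnit.mp hinj)
  set a := (1 - A)⁻¹ *ᵥ c
  have ha : a - A *ᵥ a = c := by rw [← hsub, mulVec_mulVec, mul_nonsing_inv _ hunit, one_mulVec]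
  have hle : ‖a‖ ≤ ‖c‖ + q * ‖a‖ :=
    calc ‖a‖ = ‖c + A *ᵥ a‖ := by rw [← ha, sub_add_cancel]
      _ ≤ ‖c‖ + q * ‖a‖ := (norm_add_le _ _).trans (add_le_add_right (hA a) _)
  refine ⟨a, ha, ?_⟩
  rw [le_div_iff₀ (by linarith)]
  linarith

lemma norm_mul_transpose_mul_diagonal_mulVec_le {ι κ : Type*} [Fintype ι] [DecidableEq ι]
    [Fintype κ] {U : Matrix ι κ ℝ} {g : ℝ} (hg : 0 ≤ g) (hrow : ∀ i, ∑ j, U i j ^ 2 ≤ g)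
    (S : Finset ι) (v : ι → ℝ) :
    ‖(U * Uᵀ * diagonal fun i => if i ∈ S then 1 else 0) *ᵥ v‖ ≤ S.card * g * ‖v‖ := by
  refine norm_mulVec_le_of_sum_abs_le (by positivity) (fun i => ?_) v
  calc ∑ j, |(U * Uᵀ * diagonal (fun i => if i ∈ S then 1 else 0) : Matrix ι ι ℝ) i j|
      ≤ ∑ j, if j ∈ S then g else 0 := by
        refine Finset.sum_le_sum fun j _ => ?_
        simp only [mul_diagonal, mul_ite, mul_one, mul_zero]
        split_ifs
        exacts [abs_mul_transpose_apply_le hrow i j, by simp]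
    _ = S.card * g := by
        rw [Finset.sum_ite_mem, Finset.univ_inter, Finset.sum_const, nsmul_eq_mul]

lemma exists_transpose_mulVec_eq_zero_eqOn {ι κ : Type*} [Fintype ι] [DecidableEq ι]
    [Fintype κ] [DecidableEq κ] {U : Matrix ι κ ℝ} (hU : Uᵀ * U = 1) {g : ℝ} (hg : 0 ≤ g)
    (hrow : ∀ i, ∑ j, U i j ^ 2 ≤ g) (S : Finset ι) (hS : S.card * g < 1) (b : ι → ℝ) :
    ∃ z, Uᵀ *ᵥ z = 0 ∧ (∀ i ∈ S, z i = b i) ∧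
      ∀ i ∉ S, |z i| ≤ S.card * g / (1 - S.card * g) * ‖b‖ := by
  -- `z = (1 - U Uᵀ) a`, where `a` is supported on `S` and `(1 - D U Uᵀ D) a = D b`
  set q := S.card * g
  set G := U * Uᵀ with hG
  set D : Matrix ι ι ℝ := diagonal fun i => if i ∈ S then 1 else 0
  have hGD : ∀ v, ‖(G * D) *ᵥ v‖ ≤ q * ‖v‖ :=
    norm_mul_transpose_mul_diagonal_mulVec_le hg hrow S
  clear_value G
  have hDv : ∀ v i, (D *ᵥ v) i = if i ∈ S then v i else 0 := fun v i => by
    simp [D, mulVec_diagonal]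
  have hDD : D * D = D := by simp [D, diagonal_mul_diagonal]
  have hD : ∀ v, ‖D *ᵥ v‖ ≤ ‖v‖ := fun v =>
    (pi_norm_le_iff_of_nonneg (norm_nonneg v)).mpr fun i => by
      rw [hDv]; split_ifs
      exacts [norm_le_pi_norm v i, by simp]
  obtain ⟨a, ha, ha_le⟩ := exists_sub_mulVec_eq_of_norm_mulVec_le hS
    (A := D * G * D) (fun v => by rw [mul_assoc, ← mulVec_mulVec]; exact (hD _).trans (hGD v))
    (D *ᵥ b)
  have haD : D *ᵥ a = a := by
    have h := congrArg (fun v => v - D *ᵥ v) ha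
    simp only [mulVec_sub, mulVec_mulVec, ← mul_assoc, hDD] at h
    rw [eq_comm, ← sub_eq_zero]
    simpa using h
  have hGa : G *ᵥ a = (G * D) *ᵥ a := by rw [← mulVec_mulVec, haD]
  refine ⟨a - G *ᵥ a, ?_, fun i hi => ?_, fun i hi => ?_⟩
  · rw [mulVec_sub, mulVec_mulVec, hG, ← Matrix.mul_assoc, hU, Matrix.one_mul, sub_self]
  · have h := congrFun ha i
    rw [Matrix.mul_assoc, ← mulVec_mulVec, ← hGa] at h
    simpa only [Pi.sub_apply, hDv, if_pos hi] using h
  · have hai : a i = 0 := by rw [← haD, hDv, if_neg hi]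
    rw [Pi.sub_apply, hai, zero_sub, abs_neg, hGa]
    calc |((G * D) *ᵥ a) i| ≤ q * ‖a‖ := (norm_le_pi_norm _ i).trans (hGD a)
      _ ≤ q * (‖D *ᵥ b‖ / (1 - q)) := mul_le_mul_of_nonneg_left ha_le (by positivity)
      _ ≤ q / (1 - q) * ‖b‖ := by
        rw [mul_div_assoc', div_mul_eq_mul_div]
        gcongr
        exact hD b

lemma exists_isL1Subgradient_transpose_mulVec_eq {ι κ : Type*} [Fintype ι] [DecidableEq ι]
    [Fintype κ] [DecidableEq κ] {U : Matrix ι κ ℝ} (hU : Uᵀ * U = 1) {g : ℝ} (hg : 0 ≤ g)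
    (hrow : ∀ i, ∑ j, U i j ^ 2 ≤ g) {s : ι → ℝ}
    (hs : 4 * ((Finset.univ.filter fun i => s i ≠ 0).card * g) ≤ 1)
    {lam : ℝ} (w₀ : ι → ℝ) (hlam : 2 * ‖w₀‖ ≤ lam) :
    ∃ w, Uᵀ *ᵥ w = Uᵀ *ᵥ w₀ ∧ IsL1Subgradient lam w s := by
  have hlam₀ : 0 ≤ lam := by linarith [norm_nonneg w₀]
  set S := Finset.univ.filter fun i => s i ≠ 0
  set q := S.card * g
  have hq : q / (1 - q) ≤ 1 / 3 := by rw [div_le_iff₀ (by linarith)]; linarith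
  -- `s i / |s i|` is the sign of `s i`
  set b : ι → ℝ := fun i => lam * (s i / |s i|) - w₀ i
  have hb : ‖b‖ ≤ lam + ‖w₀‖ := by
    refine (pi_norm_le_iff_of_nonneg (by positivity)).mpr fun i => ?_
    have hsi : |(s i / |s i|)| ≤ 1 := by rw [abs_div, abs_abs]; exact div_self_le_one _
    calc ‖b i‖ ≤ |lam * (s i / |s i|)| + |w₀ i| := abs_sub _ _
      _ ≤ lam * 1 + ‖w₀‖ := by
        rw [abs_mul, abs_of_nonneg hlam₀]
        gcongr
        exact norm_le_pi_norm w₀ i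
      _ = lam + ‖w₀‖ := by ring
  obtain ⟨z, hUz, hzS, hzSc⟩ := exists_transpose_mulVec_eq_zero_eqOn hU hg hrow S (by linarith) b
  refine ⟨w₀ + z, by rw [mulVec_add, hUz, add_zero], fun i => ?_⟩
  by_cases hi : s i = 0
  · have hiS : i ∉ S := by simp [S, hi]
    refine ⟨?_, by rw [hi, abs_zero, mul_zero, mul_zero]⟩
    calc |w₀ i + z i| ≤ ‖w₀‖ + q / (1 - q) * ‖b‖ :=
          (abs_add_le _ _).trans (add_le_add (norm_le_pi_norm w₀ i) (hzSc i hiS))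
      _ ≤ ‖w₀‖ + 1 / 3 * (lam + ‖w₀‖) := by gcongr
      _ ≤ lam := by linarith
  · have hiS : i ∈ S := by simp [S, hi]
    have hsi : |s i| ≠ 0 := abs_ne_zero.mpr hi
    have hw : (w₀ + z) i = lam * (s i / |s i|) := by rw [Pi.add_apply, hzS i hiS]; ring
    rw [hw]
    constructor
    · rw [abs_mul, abs_div, abs_abs, div_self hsi, mul_one, abs_of_nonneg hlam₀]
    · field_simp
      rw [sq_abs]

lemma transpose_mulVec_pinv_transpose_mulVec {m n r : Type*} [Fintype m] [Fintype n]
    [Fintype r] [DecidableEq r] {U : Matrix m r ℝ} {V : Matrix n r ℝ} {σ : r → ℝ}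
    {J : Matrix m n ℝ} (hJ : J = U * diagonal σ * Vᵀ) (hU : Uᵀ * U = 1) (hσ : ∀ i, σ i ≠ 0)
    {θ : n → ℝ} (hθ : θ = (V * diagonal (fun i => (σ i)⁻¹) * Uᵀ) *ᵥ (J *ᵥ θ)) :
    Jᵀ *ᵥ ((V * diagonal (fun i => (σ i)⁻¹) * Uᵀ)ᵀ *ᵥ θ) = θ := by
  set P := V * diagonal (fun i => (σ i)⁻¹) * Uᵀ
  have hPJ : P * J = V * Vᵀ := by
    have hσσ : diagonal (fun i => (σ i)⁻¹) * diagonal σ = 1 := by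
      rw [diagonal_mul_diagonal, ← diagonal_one]
      exact congrArg diagonal (funext fun i => inv_mul_cancel₀ (hσ i))
    simp only [P, hJ, Matrix.mul_assoc]
    rw [← Matrix.mul_assoc Uᵀ, hU, Matrix.one_mul, ← Matrix.mul_assoc (diagonal _), hσσ,
      Matrix.one_mul]
  rw [mulVec_mulVec, ← transpose_mul, hPJ, transpose_mul, transpose_transpose, ← hPJ,
    ← mulVec_mulVec, ← hθ]

lemma four_mul_mul_lt_one_of_sq_mul_lt {N r k : ℕ} {g : ℝ}
    (h : (k : ℝ) ^ 2 * r < N / (4 * (N / r * g))) : 4 * (k * g) < 1 := by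
  have hμ : 0 < (N : ℝ) / r * g := by
    by_contra! hμ
    have : (N : ℝ) / (4 * (N / r * g)) ≤ 0 :=
      div_nonpos_of_nonneg_of_nonpos (Nat.cast_nonneg _) (by linarith)
    nlinarith [sq_nonneg (k : ℝ), (Nat.cast_nonneg r : (0 : ℝ) ≤ r)]
  obtain ⟨hNr, hg⟩ : 0 < (N : ℝ) / r ∧ 0 < g := by
    have : 0 ≤ (N : ℝ) / r := by positivity
    rcases pos_and_pos_or_neg_and_neg_of_mul_pos hμ with h' | h'
    exacts [h', absurd h'.1 this.not_gt]
  obtain ⟨hN, hr⟩ : (0 : ℝ) < N ∧ (0 : ℝ) < r := by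
    rcases div_pos_iff.mp hNr with h' | h'
    exacts [h', absurd h'.1 (Nat.cast_nonneg N).not_gt]
  have hsq : 4 * ((k : ℝ) ^ 2 * g) < 1 := by
    rw [lt_div_iff₀ (by positivity)] at h
    field_simp at h
    nlinarith
  have hk : (k : ℝ) ≤ k ^ 2 := by exact_mod_cast Nat.le_self_pow two_ne_zero k
  nlinarith

theorem stmt_15_general (N p r : ℕ)
    (U : Matrix (Fin N) (Fin r) ℝ) (V : Matrix (Fin p) (Fin r) ℝ) (σ : Fin r → ℝ)
    (hU : Uᵀ * U = 1) (hσ : ∀ i, 0 < σ i)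
    (J : Matrix (Fin N) (Fin p) ℝ) (hJ : J = U * Matrix.diagonal σ * Vᵀ)
    (y sstar : Fin N → ℝ) (θstar : Fin p → ℝ)
    (hθstar : θstar = (V * Matrix.diagonal (fun i => (σ i)⁻¹) * Uᵀ).mulVec (y - sstar))
    (hy : y = J.mulVec θstar + sstar)
    (k : ℕ) (hsupp : (Finset.univ.filter (fun i => sstar i ≠ 0)).card = k)
    (μ : ℝ) (hμ : μ = ((N : ℝ) / r) * ⨆ i : Fin N, ∑ j, (U i j) ^ 2)
    (hcond : (k : ℝ) ^ 2 * r < (N : ℝ) / (4 * μ)) :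
    ∃ lam0 : ℝ, 0 < lam0 ∧ ∀ lam : ℝ, lam0 < lam →
      ∀ (α : ℝ → ℝ), (∀ γ ∈ Set.Ioo (0 : ℝ) 1, α γ = -Real.log γ / (2 * lam)) →
      ∀ (ν : ℝ → Fin N → ℝ) (θ : ℝ → Fin p → ℝ) (s : ℝ → Fin N → ℝ),
        (∀ γ ∈ Set.Ioo (0 : ℝ) 1, θ γ = J.transpose.mulVec (ν γ)) →
        (∀ γ ∈ Set.Ioo (0 : ℝ) 1, s γ = fun i =>
          γ ^ 2 * Real.exp (4 * α γ * ν γ i) - γ ^ 2 * Real.exp (-(4 * α γ * ν γ i))) →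
        (∀ γ ∈ Set.Ioo (0 : ℝ) 1, J.mulVec (θ γ) + s γ = y) →
      ∀ (θhat : Fin p → ℝ) (shat νhat : Fin N → ℝ),
        Tendsto θ (𝓝[Set.Ioo (0 : ℝ) 1] 0) (𝓝 θhat) →
        Tendsto s (𝓝[Set.Ioo (0 : ℝ) 1] 0) (𝓝 shat) →
        Tendsto ν (𝓝[Set.Ioo (0 : ℝ) 1] 0) (𝓝 νhat) →
        θhat = θstar ∧ shat = sstar := by
  set w₀ := (V * diagonal (fun i => (σ i)⁻¹) * Uᵀ)ᵀ *ᵥ θstar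
  have hJw₀ : Jᵀ *ᵥ w₀ = θstar :=
    transpose_mulVec_pinv_transpose_mulVec hJ hU (fun i => (hσ i).ne') (by
      rwa [hy, add_sub_cancel_right] at hθstar)
  have hg : 0 ≤ ⨆ i : Fin N, ∑ j, U i j ^ 2 :=
    Real.iSup_nonneg fun i => Finset.sum_nonneg fun j _ => sq_nonneg _
  have hrow : ∀ i, ∑ j, U i j ^ 2 ≤ ⨆ i : Fin N, ∑ j, U i j ^ 2 :=
    le_ciSup (Set.finite_range _).bddAbove
  have hsparse := hsupp ▸ (four_mul_mul_lt_one_of_sq_mul_lt (hμ ▸ hcond)).le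
  refine ⟨2 * ‖w₀‖ + 1, by positivity, fun lam hlam α hα ν θ s hθ hs hfit θhat shat νhat
    hθt hst hνt => ?_⟩
  obtain ⟨w, hUw, hw⟩ := exists_isL1Subgradient_transpose_mulVec_eq hU hg hrow hsparse w₀
    (by linarith)
  have hJw : Jᵀ *ᵥ w = θstar := by
    have hJT : Jᵀ = V * diagonal σ * Uᵀ := by simp [hJ, transpose_mul, Matrix.mul_assoc]
    rw [← hJw₀, hJT, ← mulVec_mulVec, hUw, mulVec_mulVec]
  have : (𝓝[Set.Ioo (0 : ℝ) 1] 0).NeBot := left_nhdsWithin_Ioo_neBot one_pos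
  have hθhat : θhat = Jᵀ *ᵥ νhat := tendsto_nhds_unique_of_eventuallyEq hθt
    ((Continuous.matrix_mulVec continuous_const continuous_id).tendsto _ |>.comp hνt)
    (eventually_nhdsWithin_of_forall hθ)
  have hfit' : J *ᵥ θhat + shat = J *ᵥ θstar + sstar := hy ▸ tendsto_nhds_unique_of_eventuallyEq
    (((Continuous.matrix_mulVec continuous_const continuous_id).tendsto _ |>.comp hθt).add hst)
    tendsto_const_nhds (eventually_nhdsWithin_of_forall hfit)
  have hνhat : IsL1Subgradient lam νhat shat :=
    isL1Subgradient_of_tendsto_flow (by linarith [norm_nonneg w₀]) hα hs hνt hst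
  exact eq_of_isL1Subgradient hfit' hθhat hJw.symm hνhat hw

/-- Main result, precise form: under the compact SVD
`J = UΣVᵀ` of rank `r`, coherence `μ(J)`, `s⋆` with exactly `k` nonzeros,
`k² r < N/(4μ(J))`, `θ⋆ = VΣ⁻¹Uᵀ(y − s⋆)` and `y = Jθ⋆ + s⋆`, there exists
`λ₀ > 0` (depending only on `(J, θ⋆, k)`) such that for every `λ > λ₀`: with
`α(γ) = −log γ/(2λ)`, if for each `γ ∈ (0,1)` there is `ν(γ)` with
`θ(γ) = Jᵀν(γ)`, `s(γ) = γ²exp(4α(γ)ν(γ)) − γ²exp(−4α(γ)ν(γ))` entrywise and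
`Jθ(γ) + s(γ) = y`, and the limits `θ̂, ŝ, ν̂` as `γ → 0⁺` exist, then
`θ̂ = θ⋆` and `ŝ = s⋆`. -/
theorem stmt_15 (N p r : ℕ) (hN : 0 < N) (hr : 0 < r)
    (U : Matrix (Fin N) (Fin r) ℝ) (V : Matrix (Fin p) (Fin r) ℝ) (σ : Fin r → ℝ)
    (hU : Uᵀ * U = 1) (hV : Vᵀ * V = 1) (hσ : ∀ i, 0 < σ i)
    (J : Matrix (Fin N) (Fin p) ℝ) (hJ : J = U * Matrix.diagonal σ * Vᵀ)
    (y sstar : Fin N → ℝ) (θstar : Fin p → ℝ)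
    (hθstar : θstar = (V * Matrix.diagonal (fun i => (σ i)⁻¹) * Uᵀ).mulVec (y - sstar))
    (hy : y = J.mulVec θstar + sstar)
    (k : ℕ) (hsupp : (Finset.univ.filter (fun i => sstar i ≠ 0)).card = k)
    (μ : ℝ) (hμ : μ = ((N : ℝ) / r) * ⨆ i : Fin N, ∑ j, (U i j) ^ 2)
    (hcond : (k : ℝ) ^ 2 * r < (N : ℝ) / (4 * μ)) :
    ∃ lam0 : ℝ, 0 < lam0 ∧ ∀ lam : ℝ, lam0 < lam →
      ∀ (α : ℝ → ℝ), (∀ γ ∈ Set.Ioo (0 : ℝ) 1, α γ = -Real.log γ / (2 * lam)) →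
      ∀ (ν : ℝ → Fin N → ℝ) (θ : ℝ → Fin p → ℝ) (s : ℝ → Fin N → ℝ),
        (∀ γ ∈ Set.Ioo (0 : ℝ) 1, θ γ = J.transpose.mulVec (ν γ)) →
        (∀ γ ∈ Set.Ioo (0 : ℝ) 1, s γ = fun i =>
          γ ^ 2 * Real.exp (4 * α γ * ν γ i) - γ ^ 2 * Real.exp (-(4 * α γ * ν γ i))) →
        (∀ γ ∈ Set.Ioo (0 : ℝ) 1, J.mulVec (θ γ) + s γ = y) →
      ∀ (θhat : Fin p → ℝ) (shat νhat : Fin N → ℝ),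
        Tendsto θ (𝓝[Set.Ioo (0 : ℝ) 1] 0) (𝓝 θhat) →
        Tendsto s (𝓝[Set.Ioo (0 : ℝ) 1] 0) (𝓝 shat) →
        Tendsto ν (𝓝[Set.Ioo (0 : ℝ) 1] 0) (𝓝 νhat) →
        θhat = θstar ∧ shat = sstar :=
  stmt_15_general N p r U V σ hU hσ J hJ y sstar θstar hθstar hy k hsupp μ hμ hcond
end
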